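/- arXiv:2510.24617 — 4 statements merged into one kernel-verified Lean document; each statement's English description precedes it below -/
import Mathlib

section
/- Let d ≥ 1, let ϱ ∈ M_d(ℂ) be a positive semidefinite Hermitian matrix with support projection p and Moore–Penrose pseudoinverse ϱ⁺, and let (ϱ_m) be a sequence of positive definite Hermitian matrices, each commuting with ϱ, converging in operator norm to ϱ. Then ‖p·ϱ_m⁻¹ − ϱ⁺‖ → 0, and consequently for every a ∈ M_d(ℂ) the matrices ϱ_m·(a·p)·ϱ_m⁻¹ converge in norm to ϱ·(a·p)·ϱ⁺. -/
open Matrix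
open scoped ComplexOrder

/-- The ℓ²-operator norm of a matrix. -/
noncomputable def l2opNorm {d : ℕ} (a : Matrix (Fin d) (Fin d) ℂ) : ℝ :=
  ‖Matrix.toEuclideanCLM (𝕜 := ℂ) a‖

/-!
The Penrose identities make `ϱ⁺` a group inverse of `ϱ`, so `p = ϱ ϱ⁺` is an idempotent commuting
with `ϱ`, hence with every `ϱ_m`. Then `ϱ + (1 - p)` is invertible with inverse `ϱ⁺ + (1 - p)`,
and `ϱ_m p + (1 - p)` with inverse `p ϱ_m⁻¹ + (1 - p)`.
So `p ϱ_m⁻¹ = (ϱ_m p + (1 - p))⁻¹ - (1 - p)`, and the first claim is continuity of inversion at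
the invertible element `ϱ p + (1 - p)`.
The second follows from `ϱ_m (a p) ϱ_m⁻¹ = ϱ_m a (p ϱ_m⁻¹)` and `p ϱ⁺ = ϱ⁺`.
-/

open Filter Topology

structure IsGroupInverse {R : Type*} [Mul R] (a b : R) : Prop where
  mul_mul_self : a * b * a = a
  mul_mul_inv : b * a * b = b
  commute : Commute a b

namespace IsGroupInverse

variable {R : Type*}

section Monoid

variable [Monoid R] {a b x : R}

theorem symm (h : IsGroupInverse a b) : IsGroupInverse b a :=
  ⟨h.mul_mul_inv, h.mul_mul_self, h.commute.symm⟩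

theorem self_mul_idem (h : IsGroupInverse a b) : a * (a * b) = a := by
  rw [h.commute.eq, ← mul_assoc, h.mul_mul_self]

theorem idem_mul_inv (h : IsGroupInverse a b) : a * b * b = b := by
  rw [h.commute.eq, h.mul_mul_inv]

theorem isIdempotentElem (h : IsGroupInverse a b) : IsIdempotentElem (a * b) := by
  rw [IsIdempotentElem, ← mul_assoc, h.mul_mul_self]

theorem commute_mul (h : IsGroupInverse a b) (hx : Commute x a) : Commute x (a * b) := by
  have hap : a * (b * a) = a := by rw [← mul_assoc, h.mul_mul_self]
  have hleft : x * (a * b) = a * b * x * (a * b) := by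
    rw [← mul_assoc, hx.eq]
    conv_lhs => rw [← h.mul_mul_self]
    simp only [mul_assoc, hx.left_comm]
  have hright : a * b * x * (a * b) = a * b * x := by
    rw [h.commute.eq]
    simp only [mul_assoc, ← hx.left_comm, hap, hx.eq]
  exact hleft.trans hright

theorem of_commute_isIdempotentElem {e : R} {u : Rˣ} (he : IsIdempotentElem e)
    (hu : Commute (u : R) e) : IsGroupInverse (u * e) (e * ↑u⁻¹) := by
  have hu' : Commute (↑u⁻¹ : R) e := hu.units_inv_left
  have hprod : (u : R) * e * (e * ↑u⁻¹) = e := by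
    rw [mul_assoc, ← mul_assoc e, he.eq, ← hu'.eq, ← mul_assoc, u.mul_inv, one_mul]
  have hprod' : e * ↑u⁻¹ * (u * e) = e := by
    rw [mul_assoc, ← mul_assoc _ (u : R), u.inv_mul, one_mul, he.eq]
  exact ⟨by rw [hprod, ← mul_assoc, ← hu.eq, mul_assoc, he.eq],
    by rw [hprod', ← mul_assoc, he.eq], hprod.trans hprod'.symm⟩

end Monoid

section Ring

variable [Ring R] {a b : R}

theorem add_one_sub_mul_add_one_sub (h : IsGroupInverse a b) :
    (a + (1 - a * b)) * (b + (1 - a * b)) = 1 := by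
  have ha : a * (1 - a * b) = 0 := by rw [mul_sub, mul_one, h.self_mul_idem, sub_self]
  have hb : (1 - a * b) * b = 0 := by rw [sub_mul, one_mul, h.idem_mul_inv, sub_self]
  rw [add_mul, mul_add, mul_add, ha, hb, h.isIdempotentElem.one_sub.eq]
  abel

theorem isUnit_add_one_sub (h : IsGroupInverse a b) : IsUnit (a + (1 - a * b)) :=
  ⟨⟨_, _, h.add_one_sub_mul_add_one_sub, by
    rw [h.commute.eq]; exact h.symm.add_one_sub_mul_add_one_sub⟩, rfl⟩

theorem inverse_add_one_sub (h : IsGroupInverse a b) :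
    Ring.inverse (a + (1 - a * b)) = b + (1 - a * b) := by
  simpa using (Ring.inverse_mul_eq_iff_eq_mul _ 1 _ h.isUnit_add_one_sub).2
    h.add_one_sub_mul_add_one_sub.symm

theorem mul_inverse_eq (h : IsGroupInverse a b) {x : R} (hx : IsUnit x)
    (hxa : Commute x a) :
    a * b * Ring.inverse x = Ring.inverse (x * (a * b) + (1 - a * b)) - (1 - a * b) := by
  obtain ⟨u, rfl⟩ := hx
  have hu := of_commute_isIdempotentElem h.isIdempotentElem (h.commute_mul hxa)
  set e := a * b
  have hprod : (u * e) * (e * ↑u⁻¹) = e := by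
    rw [hu.commute.eq, mul_assoc, Units.inv_mul_cancel_left, h.isIdempotentElem.eq]
  have := hu.inverse_add_one_sub
  rw [hprod] at this
  rw [Ring.inverse_unit, this, add_sub_cancel_right]

end Ring

section NormedRing

variable [NormedRing R] [CompleteSpace R] {a b : R}

theorem tendsto_mul_inverse {α : Type*} {l : Filter α} (h : IsGroupInverse a b) {x : α → R}
    (hx : ∀ i, IsUnit (x i)) (hxa : ∀ i, Commute (x i) a) (hlim : Tendsto x l (𝓝 a)) :
    Tendsto (fun i => a * b * Ring.inverse (x i)) l (𝓝 b) := by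
  have hcont : ContinuousAt Ring.inverse (a * (a * b) + (1 - a * b)) := by
    rw [h.self_mul_idem]
    exact NormedRing.inverse_continuousAt h.isUnit_add_one_sub.unit
  have hb : b = Ring.inverse (a * (a * b) + (1 - a * b)) - (1 - a * b) := by
    rw [h.self_mul_idem, h.inverse_add_one_sub, add_sub_cancel_right]
  simp only [fun i => h.mul_inverse_eq (hx i) (hxa i)]
  have := (hcont.tendsto.comp ((hlim.mul_const (a * b)).add_const (1 - a * b))).sub_const
    (1 - a * b)
  rwa [← hb] at this

end NormedRing

end IsGroupInverse

open scoped Matrix.Norms.L2Operator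

theorem l2opNorm_eq_norm {d : ℕ} (a : Matrix (Fin d) (Fin d) ℂ) : l2opNorm a = ‖a‖ := rfl

theorem tendsto_l2opNorm_sub_iff {α : Type*} {l : Filter α} {d : ℕ}
    {x : α → Matrix (Fin d) (Fin d) ℂ} {a : Matrix (Fin d) (Fin d) ℂ} :
    Tendsto (fun i => l2opNorm (x i - a)) l (𝓝 0) ↔ Tendsto x l (𝓝 a) := by
  simp only [l2opNorm_eq_norm]
  exact tendsto_iff_norm_sub_tendsto_zero.symm

theorem stmt3_general (d : ℕ)
    (ϱ p ϱplus : Matrix (Fin d) (Fin d) ℂ)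
    (hmp1 : ϱ * ϱplus * ϱ = ϱ) (hmp2 : ϱplus * ϱ * ϱplus = ϱplus)
    (hmp3 : ϱ * ϱplus = p) (hmp4 : ϱplus * ϱ = p)
    (ϱseq : ℕ → Matrix (Fin d) (Fin d) ℂ)
    (hpos : ∀ m, (ϱseq m).PosDef)
    (hcomm : ∀ m, ϱseq m * ϱ = ϱ * ϱseq m)
    (hconv : Filter.Tendsto (fun m => l2opNorm (ϱseq m - ϱ)) Filter.atTop (nhds 0)) :
    Filter.Tendsto (fun m => l2opNorm (p * (ϱseq m)⁻¹ - ϱplus)) Filter.atTop (nhds 0) ∧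
    ∀ a : Matrix (Fin d) (Fin d) ℂ,
      Filter.Tendsto (fun m => l2opNorm (ϱseq m * (a * p) * (ϱseq m)⁻¹ - ϱ * (a * p) * ϱplus))
        Filter.atTop (nhds 0) := by
  subst hmp3
  have hg : IsGroupInverse ϱ ϱplus := ⟨hmp1, hmp2, hmp4.symm⟩
  simp only [tendsto_l2opNorm_sub_iff] at hconv ⊢
  have hsupp : Tendsto (fun m => ϱ * ϱplus * (ϱseq m)⁻¹) atTop (𝓝 ϱplus) := by
    simpa only [nonsing_inv_eq_ringInverse] using
      hg.tendsto_mul_inverse (fun m => (hpos m).isUnit) hcomm hconv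
  refine ⟨hsupp, fun a => ?_⟩
  convert (hconv.mul_const a).mul hsupp using 2 <;> simp only [mul_assoc, hg.idem_mul_inv]

/-- let `ϱ` be positive semidefinite with support projection `p` and
Moore–Penrose pseudoinverse `ϱ⁺` (characterized by the Penrose conditions, with
`ϱ·ϱ⁺ = ϱ⁺·ϱ = p` and `p` Hermitian).  If positive definite matrices `ϱ_m`, each commuting
with `ϱ`, converge in operator norm to `ϱ`, then `‖p·ϱ_m⁻¹ − ϱ⁺‖ → 0`, and consequently for
every `a` the matrices `ϱ_m·(a·p)·ϱ_m⁻¹` converge in norm to `ϱ·(a·p)·ϱ⁺`. -/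
theorem stmt3 (d : ℕ) (hd : 1 ≤ d)
    (ϱ p ϱplus : Matrix (Fin d) (Fin d) ℂ)
    (hϱ : ϱ.PosSemidef)
    (hmp1 : ϱ * ϱplus * ϱ = ϱ) (hmp2 : ϱplus * ϱ * ϱplus = ϱplus)
    (hmp3 : ϱ * ϱplus = p) (hmp4 : ϱplus * ϱ = p) (hpherm : pᴴ = p)
    (ϱseq : ℕ → Matrix (Fin d) (Fin d) ℂ)
    (hpos : ∀ m, (ϱseq m).PosDef)
    (hcomm : ∀ m, ϱseq m * ϱ = ϱ * ϱseq m)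
    (hconv : Filter.Tendsto (fun m => l2opNorm (ϱseq m - ϱ)) Filter.atTop (nhds 0)) :
    Filter.Tendsto (fun m => l2opNorm (p * (ϱseq m)⁻¹ - ϱplus)) Filter.atTop (nhds 0) ∧
    ∀ a : Matrix (Fin d) (Fin d) ℂ,
      Filter.Tendsto (fun m => l2opNorm (ϱseq m * (a * p) * (ϱseq m)⁻¹ - ϱ * (a * p) * ϱplus))
        Filter.atTop (nhds 0) :=
  stmt3_general d ϱ p ϱplus hmp1 hmp2 hmp3 hmp4 ϱseq hpos hcomm hconv
end

section
/- Let Φ : M_m(ℂ) → M_n(ℂ) be a unital completely positive linear map, let ϱ ∈ M_n(ℂ) and ς ∈ M_m(ℂ) be density matrices with support projections p and q respectively, and suppose Tr(ϱ·Φ(b)) = Tr(ς·b) for all b ∈ M_m(ℂ). Then for every b ∈ M_m(ℂ) one has Tr(ϱ·Φ(b)·p·Φ(b)†) ≤ Tr(ς·b·q·b†). -/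
open Matrix
open scoped ComplexOrder

/-- A map `Φ : M_m(ℂ) → M_n(ℂ)` is completely positive if for every `k`, the amplification
`Φ ⊗ id` (applying `Φ` entrywise to the `k×k` block structure) maps positive semidefinite
matrices to positive semidefinite matrices. -/
def IsCompletelyPositive {m n : Type*} [Fintype m] [Fintype n]
    (Φ : Matrix m m ℂ → Matrix n n ℂ) : Prop :=
  ∀ (k : ℕ) (X : Matrix (m × Fin k) (m × Fin k) ℂ), X.PosSemidef →
    (Matrix.of fun (pr : n × Fin k) (qr : n × Fin k) =>
      Φ (Matrix.of fun (a : m) (b : m) => X (a, pr.2) (b, qr.2)) pr.1 qr.1).PosSemidef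

/-- `p` is the support projection of a positive semidefinite matrix `ϱ`: the orthogonal
projection onto the range of `ϱ`. -/
def IsSupportProjection {n : Type*} [Fintype n] (ϱ p : Matrix n n ℂ) : Prop :=
  pᴴ = p ∧ p * p = p ∧ ϱ * p = ϱ ∧ ∃ b : Matrix n n ℂ, p = ϱ * b

section Aux

lemma aux_posSemidef_eq_conjTranspose_mul_self {k : Type*} [Fintype k] [DecidableEq k]
    {A : Matrix k k ℂ} (hA : A.PosSemidef) : ∃ B : Matrix k k ℂ, A = Bᴴ * B := by
  open scoped MatrixOrder in
  obtain ⟨B, hB⟩ := CStarAlgebra.nonneg_iff_eq_star_mul_self.mp hA.nonneg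
  exact ⟨B, hB⟩

lemma aux_trace_self_mul_conjTranspose_nonneg {k l : ℕ} (M : Matrix (Fin k) (Fin l) ℂ) :
    0 ≤ (M * Mᴴ).trace := by
  rw [Matrix.trace]
  apply Finset.sum_nonneg
  intro i _
  simp only [Matrix.diag_apply, Matrix.mul_apply, Matrix.conjTranspose_apply]
  apply Finset.sum_nonneg
  intro j _
  rw [show star (M i j) = starRingEnd ℂ (M i j) from rfl, Complex.mul_conj]
  exact Complex.zero_le_real.mpr (Complex.normSq_nonneg _)

lemma aux_eq_zero_of_trace_self_mul_conjTranspose {k l : ℕ} (M : Matrix (Fin k) (Fin l) ℂ)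
    (h : (M * Mᴴ).trace = 0) : M = 0 := by
  have h' : ∀ i ∈ Finset.univ, (0:ℂ) ≤ (M * Mᴴ).diag i := by
    intro i _
    simp only [Matrix.diag_apply, Matrix.mul_apply, Matrix.conjTranspose_apply]
    apply Finset.sum_nonneg
    intro j _
    rw [show star (M i j) = starRingEnd ℂ (M i j) from rfl, Complex.mul_conj]
    exact Complex.zero_le_real.mpr (Complex.normSq_nonneg _)
  ext i j
  have h1 := (Finset.sum_eq_zero_iff_of_nonneg h').mp h i (Finset.mem_univ i)
  simp only [Matrix.diag_apply, Matrix.mul_apply, Matrix.conjTranspose_apply] at h1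
  have h2 : ∀ k ∈ Finset.univ, (0:ℂ) ≤ M i k * star (M i k) := by
    intro k _
    rw [show star (M i k) = starRingEnd ℂ (M i k) from rfl, Complex.mul_conj]
    exact Complex.zero_le_real.mpr (Complex.normSq_nonneg _)
  have h3 := (Finset.sum_eq_zero_iff_of_nonneg h2).mp h1 j (Finset.mem_univ j)
  rw [show star (M i j) = starRingEnd ℂ (M i j) from rfl, Complex.mul_conj] at h3
  simpa [Complex.ext_iff, Complex.normSq_eq_zero] using h3

lemma aux_psd_trace_mul_nonneg {k : ℕ} {A B : Matrix (Fin k) (Fin k) ℂ}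
    (hA : A.PosSemidef) (hB : B.PosSemidef) : 0 ≤ (A * B).trace := by
  obtain ⟨α, rfl⟩ := aux_posSemidef_eq_conjTranspose_mul_self hA
  obtain ⟨β, rfl⟩ := aux_posSemidef_eq_conjTranspose_mul_self hB
  have h1 : αᴴ * α * (βᴴ * β) = αᴴ * (α * βᴴ * β) := by
    simp only [Matrix.mul_assoc]
  rw [h1, Matrix.trace_mul_comm, show α * βᴴ * β * αᴴ = (α * βᴴ) * (α * βᴴ)ᴴ by
    rw [Matrix.conjTranspose_mul, Matrix.conjTranspose_conjTranspose, Matrix.mul_assoc]]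
  exact aux_trace_self_mul_conjTranspose_nonneg _

lemma aux_psd_mul_eq_zero_of_trace {k : ℕ} {A B : Matrix (Fin k) (Fin k) ℂ}
    (hA : A.PosSemidef) (hB : B.PosSemidef) (h : (A * B).trace = 0) : A * B = 0 := by
  obtain ⟨α, rfl⟩ := aux_posSemidef_eq_conjTranspose_mul_self hA
  obtain ⟨β, rfl⟩ := aux_posSemidef_eq_conjTranspose_mul_self hB
  have h1 : αᴴ * α * (βᴴ * β) = αᴴ * (α * βᴴ * β) := by
    simp only [Matrix.mul_assoc]
  rw [h1, Matrix.trace_mul_comm, show α * βᴴ * β * αᴴ = (α * βᴴ) * (α * βᴴ)ᴴ by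
    rw [Matrix.conjTranspose_mul, Matrix.conjTranspose_conjTranspose, Matrix.mul_assoc]] at h
  have h2 : α * βᴴ = 0 := aux_eq_zero_of_trace_self_mul_conjTranspose _ h
  rw [h1, show α * βᴴ * β = (α * βᴴ) * β from rfl, h2, Matrix.zero_mul, Matrix.mul_zero]

variable {m n : ℕ} (Φ : Matrix (Fin m) (Fin m) ℂ →ₗ[ℂ] Matrix (Fin n) (Fin n) ℂ)

lemma aux_blockZ (hΦcp : IsCompletelyPositive (fun x => Φ x))
    (M0 M1 : Matrix (Fin m) (Fin m) ℂ) :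
    (Matrix.of fun (pr : Fin n × Fin 2) (qr : Fin n × Fin 2) =>
      Φ ((![M0, M1] pr.2) * (![M0, M1] qr.2)ᴴ) pr.1 qr.1).PosSemidef := by
  set M : Fin 2 → Matrix (Fin m) (Fin m) ℂ := ![M0, M1] with hM
  set Y : Matrix (Fin m × Fin 2) (Fin m) ℂ := Matrix.of (fun p j => M p.2 p.1 j) with hY
  have hX : (Y * Yᴴ).PosSemidef := Matrix.posSemidef_self_mul_conjTranspose Y
  have h := hΦcp 2 (Y * Yᴴ) hX
  have hinner : ∀ (t s : Fin 2), (Matrix.of fun a b => (Y * Yᴴ) (a, t) (b, s)) = M t * (M s)ᴴ := by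
    intro t s
    ext a b
    simp [Y, Matrix.mul_apply, Matrix.conjTranspose_apply]
  simpa only [hinner] using h

lemma aux_quad (hΦcp : IsCompletelyPositive (fun x => Φ x))
    (M0 M1 : Matrix (Fin m) (Fin m) ℂ) (v w : Fin n → ℂ) :
    0 ≤ star v ⬝ᵥ Φ (M0 * M0ᴴ) *ᵥ v + star v ⬝ᵥ Φ (M0 * M1ᴴ) *ᵥ w
      + star w ⬝ᵥ Φ (M1 * M0ᴴ) *ᵥ v + star w ⬝ᵥ Φ (M1 * M1ᴴ) *ᵥ w := by
  have h := (aux_blockZ Φ hΦcp M0 M1).dotProduct_mulVec_nonneg (fun (pr : Fin n × Fin 2) => ![v, w] pr.2 pr.1)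
  have heq : star (fun (pr : Fin n × Fin 2) => ![v, w] pr.2 pr.1) ⬝ᵥ
      (Matrix.of fun (pr : Fin n × Fin 2) (qr : Fin n × Fin 2) =>
      Φ ((![M0, M1] pr.2) * (![M0, M1] qr.2)ᴴ) pr.1 qr.1) *ᵥ (fun pr => ![v, w] pr.2 pr.1)
      = star v ⬝ᵥ Φ (M0 * M0ᴴ) *ᵥ v + star v ⬝ᵥ Φ (M0 * M1ᴴ) *ᵥ w
      + star w ⬝ᵥ Φ (M1 * M0ᴴ) *ᵥ v + star w ⬝ᵥ Φ (M1 * M1ᴴ) *ᵥ w := by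
    simp only [dotProduct, Matrix.mulVec, Pi.star_apply, Matrix.of_apply,
      Fintype.sum_prod_type, Fin.sum_univ_two, Matrix.cons_val_zero, Matrix.cons_val_one,
      Matrix.head_cons, Finset.sum_add_distrib, mul_add, Finset.mul_sum]
    ring
  rw [heq] at h
  exact h

lemma aux_herm (hΦcp : IsCompletelyPositive (fun x => Φ x))
    (a : Matrix (Fin m) (Fin m) ℂ) : Φ (aᴴ) = (Φ a)ᴴ := by
  have hZ := (aux_blockZ Φ hΦcp a 1).1
  ext i j
  have h := Matrix.ext_iff.mpr hZ ((i, 1) : Fin n × Fin 2) ((j, 0) : Fin n × Fin 2)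
  simp only [Matrix.conjTranspose_apply, Matrix.of_apply, Matrix.cons_val_zero,
    Matrix.cons_val_one, Matrix.head_cons, Matrix.conjTranspose_one, Matrix.one_mul,
    Matrix.mul_one] at h
  rw [Matrix.conjTranspose_apply]
  exact h.symm ▸ rfl

lemma aux_pos (hΦcp : IsCompletelyPositive (fun x => Φ x))
    {a : Matrix (Fin m) (Fin m) ℂ} (ha : a.PosSemidef) : (Φ a).PosSemidef := by
  refine Matrix.PosSemidef.of_dotProduct_mulVec_nonneg ?_ ?_
  · show (Φ a)ᴴ = Φ a
    rw [← aux_herm Φ hΦcp, ha.1.eq]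
  · intro v
    obtain ⟨β, rfl⟩ := aux_posSemidef_eq_conjTranspose_mul_self ha
    have h := aux_quad Φ hΦcp βᴴ 0 v 0
    simpa using h
end Aux

/-- for a unital completely positive `Φ : M_m(ℂ) → M_n(ℂ)` and density matrices
`ϱ`, `ς` with support projections `p`, `q` satisfying `Tr(ϱ·Φ(b)) = Tr(ς·b)` for all `b`,
one has `Tr(ϱ·Φ(b)·p·Φ(b)†) ≤ Tr(ς·b·q·b†)` for every `b`. -/
theorem stmt4 (m n : ℕ)
    (Φ : Matrix (Fin m) (Fin m) ℂ →ₗ[ℂ] Matrix (Fin n) (Fin n) ℂ)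
    (hΦcp : IsCompletelyPositive (fun x => Φ x)) (hΦ1 : Φ 1 = 1)
    (ϱ : Matrix (Fin n) (Fin n) ℂ) (ς : Matrix (Fin m) (Fin m) ℂ)
    (hϱ : ϱ.PosSemidef) (hϱtr : ϱ.trace = 1)
    (hς : ς.PosSemidef) (hςtr : ς.trace = 1)
    (p : Matrix (Fin n) (Fin n) ℂ) (q : Matrix (Fin m) (Fin m) ℂ)
    (hp : IsSupportProjection ϱ p) (hq : IsSupportProjection ς q)
    (hdual : ∀ b : Matrix (Fin m) (Fin m) ℂ, (ϱ * Φ b).trace = (ς * b).trace) :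
    ∀ b : Matrix (Fin m) (Fin m) ℂ,
      (ϱ * Φ b * p * (Φ b)ᴴ).trace ≤ (ς * b * q * bᴴ).trace := by
  intro b
  obtain ⟨hpH, hpp, hϱp, b', hpb'⟩ := hp
  obtain ⟨hqH, hqq, hςq, -⟩ := hq
  set c : Matrix (Fin m) (Fin m) ℂ := 1 - q with hc
  have hcH : cᴴ = c := by
    simp [hc, Matrix.conjTranspose_sub, hqH]
  have hcc : c * c = c := by
    simp only [hc, Matrix.mul_sub, Matrix.sub_mul, Matrix.one_mul, Matrix.mul_one, hqq]
    abel
  have hcPSD : c.PosSemidef := by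
    have : c = cᴴ * c := by rw [hcH, hcc]
    rw [this]
    exact Matrix.posSemidef_conjTranspose_mul_self c
  have hΦc : (Φ c).PosSemidef := aux_pos Φ hΦcp hcPSD
  -- Tr(ϱ Φ(c)) = 0, hence ϱ Φ(c) = 0 and Φ(c) p = 0
  have hςc : ς * c = 0 := by
    rw [hc, Matrix.mul_sub, Matrix.mul_one, hςq, sub_self]
  have htr0 : (ϱ * Φ c).trace = 0 := by rw [hdual c, hςc, Matrix.trace_zero]
  have h0 : ϱ * Φ c = 0 := aux_psd_mul_eq_zero_of_trace hϱ hΦc htr0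
  have hΦcϱ : Φ c * ϱ = 0 := by
    have h := congrArg Matrix.conjTranspose h0
    rwa [Matrix.conjTranspose_mul, hϱ.1.eq, hΦc.1.eq, Matrix.conjTranspose_zero] at h
  have hΦcp0 : Φ c * p = 0 := by
    rw [hpb', ← Matrix.mul_assoc, hΦcϱ, Matrix.zero_mul]
  -- kill: Φ(b c) p = 0
  have hkill : Φ (b * c) * p = 0 := by
    have hZ := aux_blockZ Φ hΦcp c (b * c)
    have hx : ∀ x : Fin n → ℂ, (Φ (b * c) * p) *ᵥ x = 0 := by
      intro x
      set v0 : Fin n → ℂ := p *ᵥ x with hv0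
      set xt : Fin n × Fin 2 → ℂ := fun pr => ![v0, 0] pr.2 pr.1 with hxt
      have hΦcv0 : Φ c *ᵥ v0 = 0 := by
        rw [hv0, Matrix.mulVec_mulVec, hΦcp0, Matrix.zero_mulVec]
      have hdot : star xt ⬝ᵥ (Matrix.of fun (pr : Fin n × Fin 2) (qr : Fin n × Fin 2) =>
          Φ ((![c, b * c] pr.2) * (![c, b * c] qr.2)ᴴ) pr.1 qr.1) *ᵥ xt = 0 := by
        have heq : star xt ⬝ᵥ (Matrix.of fun (pr : Fin n × Fin 2) (qr : Fin n × Fin 2) =>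
            Φ ((![c, b * c] pr.2) * (![c, b * c] qr.2)ᴴ) pr.1 qr.1) *ᵥ xt
            = star v0 ⬝ᵥ Φ (c * cᴴ) *ᵥ v0 := by
          simp only [hxt, dotProduct, Matrix.mulVec, Pi.star_apply, Matrix.of_apply,
            Fintype.sum_prod_type, Fin.sum_univ_two, Matrix.cons_val_zero, Matrix.cons_val_one,
            Matrix.head_cons, Finset.sum_add_distrib, mul_add, Finset.mul_sum, Pi.zero_apply,
            star_zero, zero_mul, mul_zero, Finset.sum_const_zero, add_zero]
        rw [heq, hcH, hcc, hΦcv0, dotProduct_zero]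
      have hmv := (hZ.dotProduct_mulVec_zero_iff xt).mp hdot
      funext i
      have hcomp := congrFun hmv (i, (1 : Fin 2))
      simp only [Matrix.mulVec, dotProduct, Matrix.of_apply, Fintype.sum_prod_type,
        Fin.sum_univ_two, Matrix.cons_val_zero, Matrix.cons_val_one, Matrix.head_cons, hxt,
        Pi.zero_apply, mul_zero, Finset.sum_const_zero, add_zero] at hcomp
      have hbcc : b * c * cᴴ = b * c := by
        rw [hcH, Matrix.mul_assoc, hcc]
      rw [hbcc] at hcomp
      show ((Φ (b * c) * p) *ᵥ x) i = 0
      rw [← Matrix.mulVec_mulVec]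
      simpa [Matrix.mulVec, dotProduct, hv0] using hcomp
    ext i j
    have h := congrFun (hx (Pi.single j 1)) i
    simpa [Matrix.mulVec_single] using h
  -- reduce to a = b * q
  set a : Matrix (Fin m) (Fin m) ℂ := b * q with ha
  have key2 : Φ b * p = Φ a * p := by
    have hb : b = a + b * c := by
      rw [ha, hc, Matrix.mul_sub, Matrix.mul_one]
      abel
    rw [hb, map_add, Matrix.add_mul, hkill, add_zero]
  -- Kadison-Schwarz
  have hKS : (Φ (a * aᴴ) - Φ a * (Φ a)ᴴ).PosSemidef := by
    refine Matrix.PosSemidef.of_dotProduct_mulVec_nonneg ?_ ?_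
    · apply Matrix.IsHermitian.sub
      · show (Φ (a * aᴴ))ᴴ = Φ (a * aᴴ)
        rw [← aux_herm Φ hΦcp]
        congr 1
        rw [Matrix.conjTranspose_mul, Matrix.conjTranspose_conjTranspose]
      · exact Matrix.isHermitian_mul_conjTranspose_self _
    · intro v
      have h := aux_quad Φ hΦcp a 1 v (-((Φ a)ᴴ *ᵥ v))
      have hT : star v ⬝ᵥ Φ a *ᵥ ((Φ a)ᴴ *ᵥ v) = star v ⬝ᵥ (Φ a * (Φ a)ᴴ) *ᵥ v := by
        rw [Matrix.mulVec_mulVec]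
      have hU : star ((Φ a)ᴴ *ᵥ v) ⬝ᵥ ((Φ a)ᴴ *ᵥ v) = star v ⬝ᵥ (Φ a * (Φ a)ᴴ) *ᵥ v := by
        rw [Matrix.star_mulVec, Matrix.conjTranspose_conjTranspose, ← Matrix.dotProduct_mulVec,
          Matrix.mulVec_mulVec]
      simp only [Matrix.conjTranspose_one, Matrix.mul_one, Matrix.one_mul, hΦ1,
        aux_herm Φ hΦcp a, Matrix.mulVec_neg, dotProduct_neg, star_neg,
        neg_dotProduct, Matrix.one_mulVec, neg_neg] at h
      rw [hT, hU] at h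
      rw [Matrix.sub_mulVec, dotProduct_sub]
      convert h using 1
      ring
  have hS2 : (Φ a * (Φ a)ᴴ - Φ a * p * (Φ a)ᴴ).PosSemidef := by
    have h1p : ((1 : Matrix (Fin n) (Fin n) ℂ) - p) * (1 - p) = 1 - p := by
      rw [Matrix.sub_mul, Matrix.mul_sub, Matrix.mul_sub]
      simp only [Matrix.one_mul, Matrix.mul_one, hpp]
      abel
    have he : (Φ a * (1 - p)) * (Φ a * (1 - p))ᴴ = Φ a * (Φ a)ᴴ - Φ a * p * (Φ a)ᴴ := by
      rw [Matrix.conjTranspose_mul, Matrix.conjTranspose_sub, Matrix.conjTranspose_one, hpH]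
      calc Φ a * (1 - p) * ((1 - p) * (Φ a)ᴴ)
          = Φ a * ((1 - p) * (1 - p)) * (Φ a)ᴴ := by simp only [Matrix.mul_assoc]
        _ = Φ a * (1 - p) * (Φ a)ᴴ := by rw [h1p]
        _ = Φ a * (Φ a)ᴴ - Φ a * p * (Φ a)ᴴ := by
            rw [Matrix.mul_sub, Matrix.mul_one, Matrix.sub_mul]
    rw [← he]
    exact Matrix.posSemidef_self_mul_conjTranspose _
  have hS : (Φ (a * aᴴ) - Φ a * p * (Φ a)ᴴ).PosSemidef := by
    have hsum := hKS.add hS2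
    rwa [sub_add_sub_cancel] at hsum
  -- assemble
  have hL : ϱ * Φ b * p * (Φ b)ᴴ = ϱ * (Φ a * p * (Φ a)ᴴ) := by
    have h2 : ∀ M : Matrix (Fin n) (Fin n) ℂ, (M * p) * (M * p)ᴴ = M * p * Mᴴ := by
      intro M
      rw [Matrix.conjTranspose_mul, hpH, Matrix.mul_assoc, ← Matrix.mul_assoc p p, hpp,
        ← Matrix.mul_assoc]
    calc ϱ * Φ b * p * (Φ b)ᴴ = ϱ * ((Φ b * p) * (Φ b * p)ᴴ) := by
          rw [h2]; simp only [Matrix.mul_assoc]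
      _ = ϱ * ((Φ a * p) * (Φ a * p)ᴴ) := by rw [key2]
      _ = ϱ * (Φ a * p * (Φ a)ᴴ) := by rw [h2]
  have hR : (ς * b * q * bᴴ).trace = (ϱ * Φ (a * aᴴ)).trace := by
    have haa : a * aᴴ = b * q * bᴴ := by
      rw [ha, Matrix.conjTranspose_mul, hqH]
      calc b * q * (q * bᴴ) = b * (q * q) * bᴴ := by simp only [Matrix.mul_assoc]
        _ = b * q * bᴴ := by rw [hqq]
    rw [hdual, haa]
    simp only [Matrix.mul_assoc]
  rw [hL, hR]
  have hnn : 0 ≤ (ϱ * (Φ (a * aᴴ) - Φ a * p * (Φ a)ᴴ)).trace := aux_psd_trace_mul_nonneg hϱ hS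
  rw [Matrix.mul_sub, Matrix.trace_sub] at hnn
  rw [← sub_nonneg]
  rw [← Matrix.mul_assoc] at hnn ⊢
  exact hnn
end

section
/- Let n ≥ 2. A complex linear subspace V of M_n(ℂ) satisfies U·V·U† ⊆ V for every unitary matrix U ∈ M_n(ℂ) if and only if V is one of the following four subspaces: the zero subspace, the scalar multiples ℂ·1 of the identity, the subspace of trace-zero matrices, or all of M_n(ℂ). -/
open Matrix Complex

namespace Stmt6Aux

variable {n : ℕ}

noncomputable def cD (i : Fin n) (t : ℂ) (a : Matrix (Fin n) (Fin n) ℂ) :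
    Matrix (Fin n) (Fin n) ℂ :=
  diagonal (fun k => if k = i then t else 1) * a *
    (diagonal (fun k => if k = i then t else 1))ᴴ

lemma cD_apply (i : Fin n) (t : ℂ) (a : Matrix (Fin n) (Fin n) ℂ) (k l : Fin n) :
    cD i t a k l = (if k = i then t else 1) * a k l * star (if l = i then t else 1) := by
  rw [cD, diagonal_conjTranspose, Matrix.mul_diagonal, Matrix.diagonal_mul]
  simp [Pi.star_apply]

lemma cD_mem (V : Submodule ℂ (Matrix (Fin n) (Fin n) ℂ))
    (hV : ∀ U : Matrix (Fin n) (Fin n) ℂ, U * Uᴴ = 1 → ∀ a ∈ V, U * a * Uᴴ ∈ V)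
    (i : Fin n) (t : ℂ) (ht : t * star t = 1) {a} (ha : a ∈ V) : cD i t a ∈ V := by
  refine hV _ ?_ a ha
  rw [diagonal_conjTranspose, diagonal_mul_diagonal]
  ext k l
  by_cases hk : k = i <;> by_cases hkl : k = l <;>
    simp [diagonal_apply, one_apply, hk, hkl, ht] <;> simp_all [Complex.star_def] <;>
    simp [← hkl, hk, ht]

noncomputable def Pmat (i : Fin n) (a : Matrix (Fin n) (Fin n) ℂ) :
    Matrix (Fin n) (Fin n) ℂ :=
  (4⁻¹ : ℂ) • (cD i 1 a + cD i I a + cD i (-1) a + cD i (-I) a)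

lemma Pmat_mem (V : Submodule ℂ (Matrix (Fin n) (Fin n) ℂ))
    (hV : ∀ U : Matrix (Fin n) (Fin n) ℂ, U * Uᴴ = 1 → ∀ a ∈ V, U * a * Uᴴ ∈ V)
    (i : Fin n) {a} (ha : a ∈ V) : Pmat i a ∈ V := by
  refine Submodule.smul_mem _ _ (Submodule.add_mem _ (Submodule.add_mem _ (Submodule.add_mem _
    ?_ ?_) ?_) ?_) <;>
  refine cD_mem V hV _ _ ?_ ha <;> simp [Complex.star_def, Complex.conj_I, Complex.I_mul_I]

lemma Pmat_apply (i : Fin n) (a : Matrix (Fin n) (Fin n) ℂ) (k l : Fin n) :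
    Pmat i a k l = if (k = i ↔ l = i) then a k l else 0 := by
  simp only [Pmat, Matrix.smul_apply, Matrix.add_apply, cD_apply]
  by_cases hk : k = i <;> by_cases hl : l = i <;>
    simp [hk, hl, Complex.star_def, Complex.conj_I] <;> ring_nf <;>
    simp [Complex.I_sq] <;> ring

variable {V : Submodule ℂ (Matrix (Fin n) (Fin n) ℂ)}
variable (hV : ∀ U : Matrix (Fin n) (Fin n) ℂ, U * Uᴴ = 1 → ∀ a ∈ V, U * a * Uᴴ ∈ V)
include hV

lemma mask_mem {a} (ha : a ∈ V) (s : Finset (Fin n)) :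
    (Matrix.of fun k l => if k = l ∨ (k ∉ s ∧ l ∉ s) then a k l else 0) ∈ V := by
  classical
  induction s using Finset.induction_on with
  | empty =>
    have : (Matrix.of fun k l => if k = l ∨ (k ∉ (∅ : Finset (Fin n)) ∧ l ∉ (∅ : Finset (Fin n)))
        then a k l else 0) = a := by
      ext k l; simp
    rw [this]; exact ha
  | @insert i s hi ih =>
    have h2 := Pmat_mem V hV i ih
    have : (Matrix.of fun k l => if k = l ∨ (k ∉ insert i s ∧ l ∉ insert i s) then a k l else 0)
        = Pmat i (Matrix.of fun k l => if k = l ∨ (k ∉ s ∧ l ∉ s) then a k l else 0) := by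
      ext k l
      rw [Pmat_apply]
      by_cases hkl : k = l <;> by_cases hki : k = i <;> by_cases hli : l = i <;>
        simp_all
    rw [this]; exact h2

lemma diag_mem {a} (ha : a ∈ V) : (diagonal fun k => a k k) ∈ V := by
  have h := mask_mem hV ha Finset.univ
  have : (diagonal fun k => a k k)
      = (Matrix.of fun k l => if k = l ∨ (k ∉ (Finset.univ : Finset (Fin n)) ∧ l ∉ Finset.univ)
        then a k l else 0) := by
    ext k l
    by_cases hkl : k = l <;> simp [diagonal_apply, hkl]
  rw [this]; exact h

lemma offdiag_mem {a} (ha : a ∈ V) {i j : Fin n} (hij : i ≠ j) :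
    Matrix.single i j (a i j) ∈ V := by
  classical
  have hcV : a - diagonal (fun k => a k k) ∈ V := Submodule.sub_mem _ ha (diag_mem hV ha)
  set c := a - diagonal (fun k => a k k) with hc
  set s : Finset (Fin n) := {i, j}ᶜ with hs
  have hbV := mask_mem hV hcV s
  set b := (Matrix.of fun k l => if k = l ∨ (k ∉ s ∧ l ∉ s) then c k l else 0) with hbdef
  have hfinal : (4⁻¹ : ℂ) • (b + (-I) • cD i I b + (-1 : ℂ) • cD i (-1) b + I • cD i (-I) b)
      ∈ V := by
    refine Submodule.smul_mem _ _ (Submodule.add_mem _ (Submodule.add_mem _ (Submodule.add_mem _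
      hbV ?_) ?_) ?_) <;> refine Submodule.smul_mem _ _ (cD_mem V hV _ _ ?_ hbV) <;>
      simp [Complex.star_def, Complex.conj_I, Complex.I_mul_I]
  have hI2 : (I : ℂ) ^ 2 = -1 := Complex.I_sq
  have hb : ∀ l', ¬ l' = i → b i l' = if l' = j then a i j else 0 := by
    intro l' hl'
    by_cases hlj : l' = j
    · subst hlj
      simp [hbdef, hs, hij, hl', hc, diagonal_apply]
    · simp [hbdef, hs, hl', hlj, fun h : i = l' => hl' h.symm]
      exact fun h => absurd h.symm hl'
  have heq : Matrix.single i j (a i j)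
      = (4⁻¹ : ℂ) • (b + (-I) • cD i I b + (-1 : ℂ) • cD i (-1) b + I • cD i (-I) b) := by
    ext k l
    simp only [Matrix.smul_apply, Matrix.add_apply, cD_apply, smul_eq_mul]
    by_cases hk : k = i <;> by_cases hl : l = i
    · simp only [hk, hl, if_pos rfl, Matrix.single, Matrix.of_apply]
      rw [if_neg (by exact fun h => hij (h.2 ▸ rfl))]
      simp [Complex.star_def, Complex.conj_I]
    · simp only [hk, hl, if_pos rfl, if_neg hl, Matrix.single, Matrix.of_apply]
      rw [hb l hl]
      simp [Complex.star_def, Complex.conj_I]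
      by_cases hlj : l = j
      · simp [hlj]
        linear_combination (a i j / 2) * hI2
      · simp [hlj, fun h : j = l => hlj h.symm]
        exact fun h => absurd h.symm hlj
    · simp only [hk, hl, if_pos rfl, if_neg hk, Matrix.single, Matrix.of_apply]
      rw [if_neg (by exact fun h => hk h.1.symm)]
      simp [Complex.star_def, Complex.conj_I]
      linear_combination (2 * b k i) * hI2
    · simp only [if_neg hk, if_neg hl, Matrix.single, Matrix.of_apply]
      rw [if_neg (by exact fun h => hk h.1.symm)]
      simp [Complex.star_def, Complex.conj_I]
  rw [heq]; exact hfinal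

omit hV in
lemma stdConjT (i j : Fin n) (c : ℂ) :
    (Matrix.single i j c)ᴴ = Matrix.single j i (star c) := by
  ext k l
  simp [Matrix.single, conjTranspose_apply, and_comm]
  split_ifs <;> simp_all

lemma perm_mem {a} (ha : a ∈ V) (σ : Equiv.Perm (Fin n)) : a.submatrix σ σ ∈ V := by
  classical
  have hUH : ((σ.toPEquiv.toMatrix : Matrix (Fin n) (Fin n) ℂ))ᴴ
      = σ.symm.toPEquiv.toMatrix := by
    rw [Equiv.toPEquiv_symm, PEquiv.toMatrix_symm]
    ext k l
    simp [conjTranspose_apply, transpose_apply, PEquiv.toMatrix_toPEquiv_apply, Pi.single_apply, one_apply]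
  have hU1 : (σ.toPEquiv.toMatrix : Matrix (Fin n) (Fin n) ℂ)
      * ((σ.toPEquiv.toMatrix : Matrix (Fin n) (Fin n) ℂ))ᴴ = 1 := by
    rw [hUH, PEquiv.toMatrix_toPEquiv_mul]
    ext k l
    simp [submatrix_apply, PEquiv.toMatrix_apply, Equiv.toPEquiv_apply,
      Equiv.symm_apply_apply, one_apply, PEquiv.toMatrix_toPEquiv_apply, Pi.single_apply]
  have h := hV _ hU1 a ha
  rw [hUH, PEquiv.toMatrix_toPEquiv_mul, PEquiv.mul_toMatrix_toPEquiv] at h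
  simpa using h

omit hV in
lemma exists_perm (i j k l : Fin n) (hkl : k ≠ l) (hij : i ≠ j) :
    ∃ σ : Equiv.Perm (Fin n), σ k = i ∧ σ l = j := by
  classical
  refine ⟨(Equiv.swap k i).trans (Equiv.swap ((Equiv.swap k i) l) j), ?_, ?_⟩
  · simp only [Equiv.trans_apply, Equiv.swap_apply_left]
    by_cases h1 : l = i
    · rw [h1, Equiv.swap_apply_right]
      exact Equiv.swap_apply_of_ne_of_ne (fun h => hkl (h ▸ h1.symm ▸ rfl)) hij
    · rw [Equiv.swap_apply_of_ne_of_ne (Ne.symm hkl) h1]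
      exact Equiv.swap_apply_of_ne_of_ne (fun h => h1 (h ▸ rfl)) hij
  · simp [Equiv.trans_apply, Equiv.swap_apply_left]

lemma std_spread {i j : Fin n} (hij : i ≠ j) (hE : Matrix.single i j (1 : ℂ) ∈ V)
    (k l : Fin n) (hkl : k ≠ l) : Matrix.single k l (1 : ℂ) ∈ V := by
  classical
  obtain ⟨σ, hk, hl⟩ := exists_perm i j k l hkl hij
  have h := perm_mem hV hE σ
  have heq : (Matrix.single i j (1:ℂ)).submatrix σ σ = Matrix.single k l (1:ℂ) := by
    ext p q
    simp only [submatrix_apply, Matrix.single, Matrix.of_apply]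
    congr 1
    rw [← hk, ← hl]
    simp [Equiv.apply_eq_iff_eq, eq_comm]
  rwa [heq] at h

noncomputable def al : ℂ := (1 + I) / 2
noncomputable def be : ℂ := (1 - I) / 2

omit hV in
lemma h_albe : al * be = 2⁻¹ := by
  rw [al, be]; linear_combination (-(1:ℂ)/4) * Complex.I_sq

omit hV in
lemma h_sum : al + be = 1 := by rw [al, be]; ring

omit hV in
lemma h_star_al : star al = be := by
  rw [al, be, Complex.star_def]
  simp [map_div₀, Complex.conj_I, Complex.conj_ofNat]
  try ring

omit hV in
lemma h_star_be : star be = al := by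
  rw [al, be, Complex.star_def]
  simp [map_div₀, Complex.conj_I, Complex.conj_ofNat]
  try ring

omit hV in
lemma h_al_ne : al ≠ 0 := by
  rw [al]
  intro h
  rw [div_eq_zero_iff] at h
  rcases h with h | h
  · have := congrArg Complex.im h
    simp at this
  · norm_num at h

omit hV in
lemma h_be_sq : be ^ 2 = -al ^ 2 := by
  rw [al, be]; linear_combination ((1:ℂ)/2) * Complex.I_sq

noncomputable def Gmat (i j : Fin n) : Matrix (Fin n) (Fin n) ℂ :=
  1 + Matrix.single i i (al - 1) + Matrix.single i j be + Matrix.single j i be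
    + Matrix.single j j (al - 1)

set_option maxHeartbeats 1000000 in
omit hV in
lemma Gmat_unitary {i j : Fin n} (hij : i ≠ j) : Gmat i j * (Gmat i j)ᴴ = 1 := by
  have h2 : be ^ 2 = -al ^ 2 := h_be_sq
  have h1 : al * be = 2⁻¹ := h_albe
  have h0 : al + be = 1 := h_sum
  have mo1 := fun (a b : Fin n) (c d : ℂ) =>
    @Matrix.single_mul_single_of_ne _ _ _ _ _ _ _ _ _ c a i j b hij d
  have mo2 := fun (a b : Fin n) (c d : ℂ) =>
    @Matrix.single_mul_single_of_ne _ _ _ _ _ _ _ _ _ c a j i b hij.symm d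
  simp only [Gmat, conjTranspose_add, conjTranspose_one, stdConjT, star_sub, star_one,
    h_star_al, h_star_be, mul_add, add_mul, one_mul, mul_one,
    Matrix.single_mul_single_same, mo1, mo2, add_zero, zero_add]
  ext k l
  simp only [Matrix.add_apply, Matrix.one_apply, Matrix.single, Matrix.of_apply]
  by_cases hki : i = k <;> by_cases hkj : j = k <;> by_cases hli : i = l <;>
      by_cases hlj : j = l <;>
    simp_all <;>
    first
      | linear_combination 2 * h1
      | linear_combination (al + be + 1) * h0 - 2 * h1
      | linear_combination h0
      | linear_combination h1
      | linear_combination 2 * h1 + (al + be + 1) * h0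
      | ring

omit hV in
lemma Gmat_row_i {i j : Fin n} (hij : i ≠ j) (p : Fin n) :
    Gmat i j i p = if p = i then al else if p = j then be else 0 := by
  by_cases hpi : p = i
  · simp_all [Gmat, Matrix.single, Matrix.one_apply, Matrix.add_apply, hij]
    simp [Ne.symm hij]
    try ring
  · by_cases hpj : p = j
    · simp_all [Gmat, Matrix.single, Matrix.one_apply, Matrix.add_apply, hij]
      try ring
    · simp_all [Gmat, Matrix.single, Matrix.one_apply, Matrix.add_apply, hij]
      simp [Ne.symm hpi, Ne.symm hpj]

omit hV in
lemma Gmat_row_j {i j : Fin n} (hij : i ≠ j) (p : Fin n) :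
    Gmat i j j p = if p = i then be else if p = j then al else 0 := by
  by_cases hpi : p = i
  · simp_all [Gmat, Matrix.single, Matrix.one_apply, Matrix.add_apply, hij]
    simp [Ne.symm hij]
    try ring
  · by_cases hpj : p = j
    · simp_all [Gmat, Matrix.single, Matrix.one_apply, Matrix.add_apply, hij]
      try ring
    · simp_all [Gmat, Matrix.single, Matrix.one_apply, Matrix.add_apply, hij]
      simp [Ne.symm hpi, Ne.symm hpj]

omit hV in
lemma Gmat_conj_diag_entry {i j : Fin n} (hij : i ≠ j) (d : Fin n → ℂ) :
    (Gmat i j * diagonal d * (Gmat i j)ᴴ) i j = al ^ 2 * d i + be ^ 2 * d j := by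
  rw [Matrix.mul_apply]
  have hterm : ∀ p, (Gmat i j * diagonal d) i p * (Gmat i j)ᴴ p j
      = (if p = i then al * d i * star be else 0) + (if p = j then be * d j * star al else 0) := by
    intro p
    rw [Matrix.mul_diagonal, conjTranspose_apply, Gmat_row_i hij, Gmat_row_j hij]
    by_cases hpi : p = i <;> by_cases hpj : p = j <;> simp_all [hij]
  rw [Finset.sum_congr rfl (fun p _ => hterm p)]
  rw [Finset.sum_add_distrib]
  simp [Finset.sum_ite_eq', h_star_al, h_star_be]
  ring

set_option maxHeartbeats 1000000 in
omit hV in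
lemma Gmat_conj_std {i j : Fin n} (hij : i ≠ j) :
    Gmat i j * Matrix.single i j 1 * (Gmat i j)ᴴ
      = Matrix.single i i (al ^ 2) + Matrix.single i j (al * be)
        + Matrix.single j i (al * be) + Matrix.single j j (be ^ 2) := by
  have h2 : be ^ 2 = -al ^ 2 := h_be_sq
  have h1 : al * be = 2⁻¹ := h_albe
  have h0 : al + be = 1 := h_sum
  have mo1 := fun (a b : Fin n) (c d : ℂ) =>
    @Matrix.single_mul_single_of_ne _ _ _ _ _ _ _ _ _ c a i j b hij d
  have mo2 := fun (a b : Fin n) (c d : ℂ) =>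
    @Matrix.single_mul_single_of_ne _ _ _ _ _ _ _ _ _ c a j i b hij.symm d
  simp only [Gmat, conjTranspose_add, conjTranspose_one, stdConjT, star_sub, star_one,
    h_star_al, h_star_be, mul_add, add_mul, one_mul, mul_one,
    Matrix.single_mul_single_same, mo1, mo2, add_zero, zero_add]
  ext k l
  simp only [Matrix.add_apply, Matrix.single, Matrix.of_apply]
  by_cases hki : i = k <;> by_cases hkj : j = k <;> by_cases hli : i = l <;>
      by_cases hlj : j = l <;>
    simp_all <;>
    first
      | linear_combination 2 * h1
      | linear_combination (al + be + 1) * h0 - 2 * h1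
      | linear_combination h0
      | linear_combination h1
      | ring

omit hV in
lemma stdNeg (i j : Fin n) (c : ℂ) : Matrix.single i j (-c) = -Matrix.single i j c := by
  ext k l
  simp only [Matrix.single, Matrix.of_apply, Matrix.neg_apply]
  split_ifs <;> simp

lemma diff_mem (hE : ∀ k l : Fin n, k ≠ l → Matrix.single k l (1 : ℂ) ∈ V)
    {i j : Fin n} (hij : i ≠ j) :
    Matrix.single i i (1 : ℂ) - Matrix.single j j (1 : ℂ) ∈ V := by
  have hw := hV _ (Gmat_unitary hij) _ (hE i j hij)
  rw [Gmat_conj_std hij] at hw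
  have hsm : ∀ (k l : Fin n), k ≠ l → Matrix.single k l (al * be) ∈ V := by
    intro k l hkl
    have := Submodule.smul_mem V (al * be) (hE k l hkl)
    rwa [smul_single, smul_eq_mul, mul_one] at this
  have hww : Matrix.single i i (al ^ 2) + Matrix.single j j (be ^ 2) ∈ V := by
    have h := Submodule.sub_mem V (Submodule.sub_mem V hw (hsm i j hij)) (hsm j i hij.symm)
    have heq : Matrix.single i i (al ^ 2) + Matrix.single i j (al * be)
        + Matrix.single j i (al * be) + Matrix.single j j (be ^ 2)
        - Matrix.single i j (al * be) - Matrix.single j i (al * be)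
        = Matrix.single i i (al ^ 2) + Matrix.single j j (be ^ 2) := by abel
    rwa [heq] at h
  have h := Submodule.smul_mem V ((al ^ 2)⁻¹) hww
  have hne : al ^ 2 ≠ 0 := pow_ne_zero 2 h_al_ne
  rw [smul_add, smul_single, smul_single, h_be_sq, smul_eq_mul, smul_eq_mul,
    inv_mul_cancel₀ hne, mul_neg, inv_mul_cancel₀ hne, stdNeg, ← sub_eq_add_neg] at h
  exact h

lemma traceless_mem (hn : 2 ≤ n) (hE : ∀ k l : Fin n, k ≠ l → Matrix.single k l (1:ℂ) ∈ V)
    {a : Matrix (Fin n) (Fin n) ℂ} (htr : ∑ k, a k k = 0) : a ∈ V := by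
  classical
  have hn0 : 0 < n := by omega
  have hrepr : a = (∑ k, a k k • (Matrix.single k k (1:ℂ) - Matrix.single ⟨0,hn0⟩ ⟨0,hn0⟩ 1))
      + ∑ k, ∑ l, if k = l then 0 else Matrix.single k l (a k l) := by
    have h1 : ∑ k, a k k • (Matrix.single k k (1:ℂ) - Matrix.single ⟨0,hn0⟩ ⟨0,hn0⟩ 1)
        = ∑ k, Matrix.single k k (a k k) := by
      simp only [smul_sub]
      rw [Finset.sum_sub_distrib, ← Finset.sum_smul, htr, zero_smul, sub_zero]
      refine Finset.sum_congr rfl fun k _ => ?_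
      rw [smul_single, smul_eq_mul, mul_one]
    rw [h1]
    conv_lhs => rw [matrix_eq_sum_single a]
    rw [← Finset.sum_add_distrib]
    refine Finset.sum_congr rfl fun k _ => ?_
    have h2 : Matrix.single k k (a k k) = ∑ l, if k = l then Matrix.single k l (a k l) else 0 := by
      rw [Finset.sum_ite_eq]; simp
    rw [h2, ← Finset.sum_add_distrib]
    refine Finset.sum_congr rfl fun l _ => ?_
    by_cases hkl : k = l <;> simp [hkl]
  rw [hrepr]
  refine Submodule.add_mem _ (Submodule.sum_mem _ fun k _ => ?_)
    (Submodule.sum_mem _ fun k _ => Submodule.sum_mem _ fun l _ => ?_)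
  · by_cases hk : k = ⟨0,hn0⟩
    · subst hk; simp
    · exact Submodule.smul_mem _ _ (diff_mem hV hE hk)
  · by_cases hkl : k = l
    · simp [hkl]
    · have h3 := Submodule.smul_mem V (a k l) (hE k l hkl)
      rw [smul_single, smul_eq_mul, mul_one] at h3
      simp [hkl, h3]

lemma key_hE (hn : 2 ≤ n)
    (hex : ∃ a ∈ V, ∀ c : ℂ, a ≠ c • (1 : Matrix (Fin n) (Fin n) ℂ)) :
    ∀ k l : Fin n, k ≠ l → Matrix.single k l (1:ℂ) ∈ V := by
  classical
  obtain ⟨a, haV, hnc⟩ := hex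
  have hn0 : 0 < n := by omega
  have hone : ∃ i j : Fin n, i ≠ j ∧ Matrix.single i j (1:ℂ) ∈ V := by
    by_cases hoff : ∃ i j, i ≠ j ∧ a i j ≠ 0
    · obtain ⟨i, j, hij, hne⟩ := hoff
      refine ⟨i, j, hij, ?_⟩
      have h1 := Submodule.smul_mem V (a i j)⁻¹ (offdiag_mem hV haV hij)
      rwa [smul_single, smul_eq_mul, inv_mul_cancel₀ hne] at h1
    · push_neg at hoff
      have hdiag : ∃ i j : Fin n, a i i ≠ a j j := by
        by_contra hcon
        push_neg at hcon
        apply hnc (a ⟨0,hn0⟩ ⟨0,hn0⟩)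
        ext k l
        by_cases hkl : k = l
        · subst hkl
          simp [Matrix.smul_apply, Matrix.one_apply, hcon k ⟨0,hn0⟩]
        · simp [hoff k l hkl, Matrix.smul_apply, Matrix.one_apply, hkl]
      obtain ⟨i, j, hne⟩ := hdiag
      have hij : i ≠ j := fun h => hne (h ▸ rfl)
      have ha : a = diagonal (fun k => a k k) := by
        ext k l
        by_cases hkl : k = l
        · subst hkl; simp [diagonal_apply]
        · simp [diagonal_apply, hkl, hoff k l hkl]
      have hw := hV _ (Gmat_unitary hij) a haV
      have hval : (Gmat i j * a * (Gmat i j)ᴴ) i j = al^2 * a i i + be^2 * a j j := by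
        conv_lhs => rw [ha]
        exact Gmat_conj_diag_entry hij _
      have hwij : (Gmat i j * a * (Gmat i j)ᴴ) i j ≠ 0 := by
        rw [hval, h_be_sq]
        intro h
        have h2 : al^2 * (a i i - a j j) = 0 := by linear_combination h
        rcases mul_eq_zero.mp h2 with h3 | h3
        · exact pow_ne_zero 2 h_al_ne h3
        · exact hne (sub_eq_zero.mp h3)
      refine ⟨i, j, hij, ?_⟩
      have h1 := Submodule.smul_mem V ((Gmat i j * a * (Gmat i j)ᴴ) i j)⁻¹ (offdiag_mem hV hw hij)
      rwa [smul_single, smul_eq_mul, inv_mul_cancel₀ hwij] at h1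
  obtain ⟨i, j, hij, hEij⟩ := hone
  exact std_spread hV hij hEij

end Stmt6Aux

/-- for `n ≥ 2`, a complex linear subspace `V ⊆ M_n(ℂ)` is invariant under all
unitary conjugations `a ↦ U·a·U†` if and only if it is `0`, `ℂ·1`, the trace-zero matrices,
or all of `M_n(ℂ)`. -/
theorem stmt6 (n : ℕ) (hn : 2 ≤ n) (V : Submodule ℂ (Matrix (Fin n) (Fin n) ℂ)) :
    (∀ U : Matrix (Fin n) (Fin n) ℂ, U * Uᴴ = 1 → ∀ a ∈ V, U * a * Uᴴ ∈ V) ↔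
      (V = ⊥ ∨ V = Submodule.span ℂ {(1 : Matrix (Fin n) (Fin n) ℂ)} ∨
        V = LinearMap.ker (Matrix.traceLinearMap (Fin n) ℂ ℂ) ∨ V = ⊤) := by
  constructor
  · intro hV
    by_cases hsc : ∀ a ∈ V, ∃ c : ℂ, a = c • (1 : Matrix (Fin n) (Fin n) ℂ)
    · by_cases h0 : V = ⊥
      · exact Or.inl h0
      · refine Or.inr (Or.inl ?_)
        obtain ⟨a, haV, hane⟩ : ∃ a ∈ V, a ≠ 0 := by
          by_contra hcon
          push_neg at hcon
          exact h0 ((Submodule.eq_bot_iff V).mpr hcon)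
        apply le_antisymm
        · intro x hx
          obtain ⟨c, rfl⟩ := hsc x hx
          exact Submodule.smul_mem _ _ (Submodule.mem_span_singleton_self _)
        · obtain ⟨c, hc⟩ := hsc a haV
          have hc0 : c ≠ 0 := by rintro rfl; rw [zero_smul] at hc; exact hane hc
          have h1 : (1 : Matrix (Fin n) (Fin n) ℂ) ∈ V := by
            have h2 := Submodule.smul_mem V c⁻¹ haV
            rwa [hc, smul_smul, inv_mul_cancel₀ hc0, one_smul] at h2
          rw [Submodule.span_singleton_le_iff_mem]
          exact h1
    · push_neg at hsc
      have hE := Stmt6Aux.key_hE hV hn hsc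
      have hsl : ∀ b : Matrix (Fin n) (Fin n) ℂ, b.trace = 0 → b ∈ V := by
        intro b hb
        exact Stmt6Aux.traceless_mem hV hn hE (by simpa [Matrix.trace, Matrix.diag] using hb)
      have hnn : (n : ℂ) ≠ 0 := Nat.cast_ne_zero.mpr (by omega)
      have htr1 : ∀ m : Matrix (Fin n) (Fin n) ℂ, (m - (m.trace / n) • 1).trace = 0 := by
        intro m
        rw [Matrix.trace_sub, Matrix.trace_smul, Matrix.trace_one]
        simp only [smul_eq_mul, Fintype.card_fin]
        field_simp
        ring
      by_cases htr : ∀ a ∈ V, a.trace = 0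
      · refine Or.inr (Or.inr (Or.inl ?_))
        apply le_antisymm
        · intro x hx
          simpa [LinearMap.mem_ker, Matrix.traceLinearMap] using htr x hx
        · intro x hx
          refine hsl x ?_
          simpa [LinearMap.mem_ker, Matrix.traceLinearMap] using hx
      · refine Or.inr (Or.inr (Or.inr ?_))
        push_neg at htr
        obtain ⟨a, haV, hta⟩ := htr
        have h1 : (1 : Matrix (Fin n) (Fin n) ℂ) ∈ V := by
          have h2 : a - (a.trace / n) • 1 ∈ V := hsl _ (htr1 a)
          have h3 : (a.trace / n) • (1 : Matrix (Fin n) (Fin n) ℂ) ∈ V := by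
            have h4 := Submodule.sub_mem V haV h2
            simpa using h4
          have h5 := Submodule.smul_mem V (a.trace / n)⁻¹ h3
          rwa [smul_smul, inv_mul_cancel₀ (div_ne_zero hta hnn), one_smul] at h5
        rw [eq_top_iff]
        intro m _
        have hm : m - (m.trace / n) • 1 ∈ V := hsl _ (htr1 m)
        have h6 := Submodule.add_mem V hm (Submodule.smul_mem V (m.trace / n) h1)
        simpa using h6
  · rintro (rfl | rfl | rfl | rfl) U hU a ha
    · simp only [Submodule.mem_bot] at ha ⊢
      rw [ha]
      simp
    · rw [Submodule.mem_span_singleton] at ha ⊢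
      obtain ⟨c, rfl⟩ := ha
      exact ⟨c, by rw [mul_smul_comm, mul_one, smul_mul_assoc, hU]⟩
    · have h7 : Uᴴ * U = 1 := mul_eq_one_comm.mp hU
      have ha' : a.trace = 0 := by simpa [LinearMap.mem_ker, Matrix.traceLinearMap] using ha
      have h8 : (U * a * Uᴴ).trace = 0 := by
        rw [Matrix.trace_mul_cycle, h7, Matrix.one_mul]
        exact ha'
      simpa [LinearMap.mem_ker, Matrix.traceLinearMap] using h8
    · trivial
end

section
/- Let f : [0,∞) → ℝ be continuous with f(0) > 0 and operator monotone on (0,∞). Let A ∈ M_N(ℂ) and B ∈ M_M(ℂ) be positive semidefinite Hermitian matrices, and let V be an N×M complex matrix with operator norm ‖V‖ ≤ 1 such that V†·A·V ≤ B in the Loewner order. Then V†·f(A)·V ≤ f(B) in the Loewner order, where f(A) and f(B) are defined by the functional calculus for Hermitian matrices. -/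
open Matrix
open scoped ComplexOrder

/-- `f` is operator monotone on `(0,∞)`: for every `k` and all positive definite Hermitian
`X ≤ Y` (Loewner order) in `M_k(ℂ)`, one has `f(X) ≤ f(Y)`, `f` being applied through the
functional calculus for Hermitian matrices. -/
def OperatorMonotoneOnPos (f : ℝ → ℝ) : Prop :=
  ∀ (k : ℕ) (X Y : Matrix (Fin k) (Fin k) ℂ) (hX : X.PosDef) (hY : Y.PosDef),
    (Y - X).PosSemidef →
    (Matrix.IsHermitian.cfc hY.1 f - Matrix.IsHermitian.cfc hX.1 f).PosSemidef

open Polynomial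

variable {n m : Type*} [Fintype n] [DecidableEq n] [Fintype m] [DecidableEq m]

/-- Conjugation by a unitary as an ℝ-algebra hom. -/
noncomputable def conjAH (U : Matrix n n ℂ) (hU : U * Uᴴ = 1) :
    Matrix n n ℂ →ₐ[ℝ] Matrix n n ℂ where
  toFun X := U * X * Uᴴ
  map_one' := by show U * 1 * Uᴴ = 1; rw [mul_one, hU]
  map_mul' X Y := by
    have hU' : Uᴴ * U = 1 := mul_eq_one_comm.mp hU
    show U * (X * Y) * Uᴴ = (U * X * Uᴴ) * (U * Y * Uᴴ)
    calc U * (X * Y) * Uᴴ = U * X * (Uᴴ * U) * Y * Uᴴ := by rw [hU']; noncomm_ring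
    _ = U * X * Uᴴ * (U * Y * Uᴴ) := by noncomm_ring
  map_zero' := by show U * 0 * Uᴴ = 0; simp
  map_add' X Y := by show U * (X + Y) * Uᴴ = U * X * Uᴴ + U * Y * Uᴴ; noncomm_ring
  commutes' r := by
    show U * (algebraMap ℝ (Matrix n n ℂ) r) * Uᴴ = algebraMap ℝ (Matrix n n ℂ) r
    rw [show U * (algebraMap ℝ (Matrix n n ℂ) r) = (algebraMap ℝ (Matrix n n ℂ) r) * U from
      (Algebra.commutes r U).symm, mul_assoc, hU, mul_one]

lemma aeval_diagonal (d : n → ℂ) (p : ℝ[X]) :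
    Polynomial.aeval (Matrix.diagonal d) p
      = Matrix.diagonal (fun i => Polynomial.aeval (d i) p) := by
  have h1 := Polynomial.aeval_algHom_apply (Matrix.diagonalAlgHom (n := n) ℝ (α := ℂ)) d p
  simp only [Matrix.diagonalAlgHom_apply] at h1
  rw [h1]
  have h2 : (Polynomial.aeval d p : n → ℂ) = fun i => Polynomial.aeval (d i) p := by
    funext i
    exact (Polynomial.aeval_algHom_apply (Pi.evalAlgHom ℝ (fun _ : n => ℂ) i) d p).symm
  rw [h2]

lemma aeval_unitary_diag (U : Matrix n n ℂ) (hU : U * Uᴴ = 1) (μ : n → ℝ) (p : ℝ[X]) :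
    Polynomial.aeval (U * Matrix.diagonal (fun i => (μ i : ℂ)) * Uᴴ) p
      = U * Matrix.diagonal (fun i => ((p.eval (μ i) : ℝ) : ℂ)) * Uᴴ := by
  have h1 := Polynomial.aeval_algHom_apply (conjAH U hU) (Matrix.diagonal (fun i => (μ i : ℂ))) p
  have h2 : conjAH U hU (Matrix.diagonal (fun i => (μ i : ℂ)))
      = U * Matrix.diagonal (fun i => (μ i : ℂ)) * Uᴴ := rfl
  rw [h2] at h1
  rw [h1, aeval_diagonal]
  have h3 : (fun i => Polynomial.aeval ((μ i : ℂ)) p) = (fun i => ((p.eval (μ i) : ℝ) : ℂ)) := by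
    funext i
    simpa using Polynomial.aeval_algebraMap_apply_eq_algebraMap_eval (A := ℂ) (μ i) p
  show conjAH U hU _ = _
  rw [h3]
  rfl

lemma cfc_eq_aeval {X : Matrix n n ℂ} (hX : X.IsHermitian) (f : ℝ → ℝ) (p : ℝ[X])
    (hp : ∀ i, p.eval (hX.eigenvalues i) = f (hX.eigenvalues i)) :
    hX.cfc f = Polynomial.aeval X p := by
  have hW : (hX.eigenvectorUnitary : Matrix n n ℂ) * (hX.eigenvectorUnitary : Matrix n n ℂ)ᴴ
      = 1 := by
    rw [← Matrix.star_eq_conjTranspose]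
    exact Matrix.mem_unitaryGroup_iff.mp hX.eigenvectorUnitary.2
  have hspec : X = (hX.eigenvectorUnitary : Matrix n n ℂ) *
      Matrix.diagonal (fun i => ((hX.eigenvalues i : ℝ) : ℂ)) *
      (hX.eigenvectorUnitary : Matrix n n ℂ)ᴴ := by
    conv_lhs => rw [hX.spectral_theorem]
    rfl
  rw [Matrix.IsHermitian.cfc]
  conv_rhs => rw [hspec, aeval_unitary_diag _ hW]
  rw [← Matrix.star_eq_conjTranspose]
  have h2 : (RCLike.ofReal ∘ f ∘ hX.eigenvalues : n → ℂ)
      = fun i => ((p.eval (hX.eigenvalues i) : ℝ) : ℂ) := by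
    funext i
    exact congrArg Complex.ofReal (hp i).symm
  rw [h2]
  rfl

lemma cfc_decomp {X : Matrix n n ℂ} (hX : X.IsHermitian) (f : ℝ → ℝ)
    (U : Matrix n n ℂ) (hU : U * Uᴴ = 1) (μ : n → ℝ)
    (hdec : X = U * Matrix.diagonal (fun i => ((μ i : ℝ) : ℂ)) * Uᴴ) :
    hX.cfc f = U * Matrix.diagonal (fun i => ((f (μ i) : ℝ) : ℂ)) * Uᴴ := by
  classical
  set s : Finset ℝ :=
    Finset.image hX.eigenvalues Finset.univ ∪ Finset.image μ Finset.univ with hs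
  set p := Lagrange.interpolate s id f with hpdef
  have heval : ∀ r ∈ s, p.eval r = f r := fun r hr =>
    Lagrange.eval_interpolate_at_node f (Set.injOn_id _) hr
  rw [cfc_eq_aeval hX f p (fun i => heval _ (by simp [hs]))]
  rw [hdec, aeval_unitary_diag U hU μ p]
  have h2 : (fun i => ((p.eval (μ i) : ℝ) : ℂ)) = fun i => ((f (μ i) : ℝ) : ℂ) := by
    funext i
    rw [heval _ (by simp [hs])]
  rw [h2]

lemma aeval_comm_of_comm {P : Matrix n n ℂ} {Q : Matrix m m ℂ} {V : Matrix n m ℂ}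
    (h : P * V = V * Q) (p : ℝ[X]) :
    Polynomial.aeval P p * V = V * Polynomial.aeval Q p := by
  have hpow : ∀ k : ℕ, P ^ k * V = V * Q ^ k := by
    intro k; induction k with
    | zero => simp
    | succ k ih =>
        rw [pow_succ, pow_succ, Matrix.mul_assoc, h, ← Matrix.mul_assoc, ih,
          Matrix.mul_assoc]
  induction p using Polynomial.induction_on' with
  | add p q hp hq => rw [map_add, map_add, Matrix.add_mul, Matrix.mul_add, hp, hq]
  | monomial k a =>
      rw [Polynomial.aeval_monomial, Polynomial.aeval_monomial,
        Algebra.algebraMap_eq_smul_one, Algebra.algebraMap_eq_smul_one, smul_mul_assoc,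
        smul_mul_assoc, one_mul, one_mul, Matrix.smul_mul, Matrix.mul_smul, hpow k]

noncomputable def psdSqrt {P : Matrix n n ℂ} (hP : P.PosSemidef) : Matrix n n ℂ :=
  hP.1.cfc Real.sqrt

lemma sqrt_eq_cfc {P : Matrix n n ℂ} (hP : P.PosSemidef) :
    psdSqrt hP = hP.1.cfc Real.sqrt := rfl

lemma sqrt_intertwine {P : Matrix n n ℂ} {Q : Matrix m m ℂ} (hP : P.PosSemidef)
    (hQ : Q.PosSemidef) (V : Matrix n m ℂ) (h : P * V = V * Q) :
    psdSqrt hP * V = V * psdSqrt hQ := by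
  classical
  set s : Finset ℝ :=
    Finset.image hP.1.eigenvalues Finset.univ ∪ Finset.image hQ.1.eigenvalues Finset.univ with hs
  set p := Lagrange.interpolate s id Real.sqrt with hpdef
  have heval : ∀ r ∈ s, p.eval r = Real.sqrt r := fun r hr =>
    Lagrange.eval_interpolate_at_node Real.sqrt (Set.injOn_id _) hr
  rw [sqrt_eq_cfc hP, sqrt_eq_cfc hQ,
    cfc_eq_aeval hP.1 Real.sqrt p (fun i => heval _ (by simp [hs])),
    cfc_eq_aeval hQ.1 Real.sqrt p (fun i => heval _ (by simp [hs]))]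
  exact aeval_comm_of_comm h p

lemma herm_conj_diag (U : Matrix n n ℂ) (g : n → ℝ) :
    (U * Matrix.diagonal (fun i => ((g i : ℝ) : ℂ)) * Uᴴ).IsHermitian := by
  apply Matrix.isHermitian_mul_mul_conjTranspose
  exact Matrix.isHermitian_diagonal_of_self_adjoint _
    (funext fun i => Complex.conj_ofReal (g i))

lemma psd_conj_diag (U : Matrix n n ℂ) {g : n → ℝ} (hg : ∀ i, 0 ≤ g i) :
    (U * Matrix.diagonal (fun i => ((g i : ℝ) : ℂ)) * Uᴴ).PosSemidef :=
  (Matrix.PosSemidef.diagonal fun i => Complex.zero_le_real.mpr (hg i)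
    ).mul_mul_conjTranspose_same U

lemma dot_diag (d : n → ℝ) (y : n → ℂ) :
    dotProduct (star y) (Matrix.diagonal (fun i => ((d i : ℝ) : ℂ)) *ᵥ y)
      = ((∑ i, d i * Complex.normSq (y i) : ℝ) : ℂ) := by
  simp only [dotProduct, Matrix.mulVec_diagonal, Pi.star_apply, Complex.ofReal_sum]
  refine Finset.sum_congr rfl fun i _ => ?_
  rw [Complex.ofReal_mul, ← Complex.mul_conj, Complex.star_def]
  ring

lemma pd_conj_diag {U : Matrix n n ℂ} (hU : U * Uᴴ = 1) {g : n → ℝ} (hg : ∀ i, 0 < g i) :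
    (U * Matrix.diagonal (fun i => ((g i : ℝ) : ℂ)) * Uᴴ).PosDef := by
  refine Matrix.PosDef.of_dotProduct_mulVec_pos (herm_conj_diag U g) fun x hx => ?_
  have hy : Uᴴ *ᵥ x ≠ 0 := by
    intro h0
    apply hx
    have : U *ᵥ (Uᴴ *ᵥ x) = x := by rw [Matrix.mulVec_mulVec, hU, Matrix.one_mulVec]
    rw [h0, Matrix.mulVec_zero] at this
    exact this.symm
  set y := Uᴴ *ᵥ x with hydef
  have h1 : dotProduct (star x) ((U * Matrix.diagonal (fun i => ((g i : ℝ) : ℂ)) * Uᴴ) *ᵥ x)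
      = dotProduct (star y) (Matrix.diagonal (fun i => ((g i : ℝ) : ℂ)) *ᵥ y) := by
    rw [← Matrix.mulVec_mulVec, ← Matrix.mulVec_mulVec, Matrix.dotProduct_mulVec, hydef,
      Matrix.star_mulVec]
    congr 1
    rw [Matrix.conjTranspose_conjTranspose]
  rw [h1, dot_diag]
  have hyi : ∃ i, y i ≠ 0 := by
    by_contra hc
    push_neg at hc
    exact hy (funext hc)
  obtain ⟨i0, hi0⟩ := hyi
  have : 0 < ∑ i, g i * Complex.normSq (y i) := by
    apply Finset.sum_pos'
    · exact fun i _ => mul_nonneg (hg i).le (Complex.normSq_nonneg _)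
    · exact ⟨i0, Finset.mem_univ _,
        mul_pos (hg i0) (by simpa [Complex.normSq_pos] using hi0)⟩
  exact_mod_cast Complex.zero_lt_real.mpr this

omit [DecidableEq n] in
lemma psd_real_smul {Q : Matrix n n ℂ} (hQ : Q.PosSemidef) {r : ℝ} (hr : 0 ≤ r) :
    (((r : ℂ)) • Q).PosSemidef := by
  refine Matrix.PosSemidef.of_dotProduct_mulVec_nonneg ?_ ?_
  · unfold Matrix.IsHermitian
    rw [Matrix.conjTranspose_smul, hQ.1.eq, Complex.star_def, Complex.conj_ofReal]
  · intro x
    rw [Matrix.smul_mulVec, dotProduct_smul]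
    exact mul_nonneg (Complex.zero_le_real.mpr hr) (hQ.dotProduct_mulVec_nonneg x)

lemma unitary_mul_conjT {X : Matrix n n ℂ} (hX : X.IsHermitian) :
    (hX.eigenvectorUnitary : Matrix n n ℂ) * (hX.eigenvectorUnitary : Matrix n n ℂ)ᴴ = 1 := by
  rw [← Matrix.star_eq_conjTranspose]
  exact Matrix.mem_unitaryGroup_iff.mp hX.eigenvectorUnitary.2

lemma spectral' {X : Matrix n n ℂ} (hX : X.IsHermitian) :
    X = (hX.eigenvectorUnitary : Matrix n n ℂ) *
      Matrix.diagonal (fun i => ((hX.eigenvalues i : ℝ) : ℂ)) *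
      (hX.eigenvectorUnitary : Matrix n n ℂ)ᴴ := by
  conv_lhs => rw [hX.spectral_theorem]
  rfl

lemma conj_diag_mul (W : Matrix n n ℂ) (hW : Wᴴ * W = 1) (a b : n → ℝ) :
    W * Matrix.diagonal (fun i => ((a i : ℝ) : ℂ)) * Wᴴ
        * (W * Matrix.diagonal (fun i => ((b i : ℝ) : ℂ)) * Wᴴ)
      = W * Matrix.diagonal (fun i => ((a i * b i : ℝ) : ℂ)) * Wᴴ := by
  calc _ = W * (Matrix.diagonal (fun i => ((a i : ℝ) : ℂ)) * (Wᴴ * W)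
          * Matrix.diagonal (fun i => ((b i : ℝ) : ℂ))) * Wᴴ := by
        simp only [Matrix.mul_assoc]
    _ = _ := by
        rw [hW, Matrix.mul_one, Matrix.diagonal_mul_diagonal]
        simp only [Complex.ofReal_mul]

lemma psdSqrt_mul_self {P : Matrix n n ℂ} (hP : P.PosSemidef) :
    psdSqrt hP * psdSqrt hP = P := by
  rw [psdSqrt, cfc_decomp hP.1 Real.sqrt _ (unitary_mul_conjT hP.1) _ (spectral' hP.1),
    conj_diag_mul _ (mul_eq_one_comm.mp (unitary_mul_conjT hP.1))]
  have h : (fun i => ((Real.sqrt (hP.1.eigenvalues i) * Real.sqrt (hP.1.eigenvalues i) : ℝ) : ℂ))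
      = fun i => ((hP.1.eigenvalues i : ℝ) : ℂ) := by
    funext i
    rw [Real.mul_self_sqrt (hP.eigenvalues_nonneg i)]
  rw [h]
  exact (spectral' hP.1).symm

lemma psdSqrt_psd {P : Matrix n n ℂ} (hP : P.PosSemidef) : (psdSqrt hP).PosSemidef := by
  rw [psdSqrt, cfc_decomp hP.1 Real.sqrt _ (unitary_mul_conjT hP.1) _ (spectral' hP.1)]
  exact psd_conj_diag _ (fun i => Real.sqrt_nonneg _)

lemma exists_smul_one_sub_psd {H : Matrix n n ℂ} (hH : H.IsHermitian) :
    ∃ c : ℝ, 0 < c ∧ (((c : ℂ)) • 1 - H).PosSemidef := by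
  classical
  set W := (hH.eigenvectorUnitary : Matrix n n ℂ) with hWdef
  set ν := hH.eigenvalues with hνdef
  set c := (∑ i, |ν i|) + 1 with hc
  refine ⟨c, by positivity, ?_⟩
  have hbd : ∀ i, 0 ≤ c - ν i := by
    intro i
    have h1 : |ν i| ≤ ∑ i, |ν i| := Finset.single_le_sum (f := fun i => |ν i|)
      (fun j _ => abs_nonneg _) (Finset.mem_univ i)
    have := le_abs_self (ν i)
    simp only [hc]
    linarith
  have key : ((c : ℂ)) • (1 : Matrix n n ℂ) - H
      = W * Matrix.diagonal (fun i => ((c - ν i : ℝ) : ℂ)) * Wᴴ := by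
    have h2 : (fun i => ((c - ν i : ℝ) : ℂ))
        = fun i => ((c : ℂ)) - ((ν i : ℝ) : ℂ) := by
      funext i; push_cast; ring
    rw [h2, ← Matrix.diagonal_sub, Matrix.mul_sub, Matrix.sub_mul]
    rw [← Matrix.smul_one_eq_diagonal, Matrix.mul_smul, Matrix.smul_mul, mul_one,
      unitary_mul_conjT hH, ← spectral' hH]
  rw [key]
  exact psd_conj_diag W hbd

omit [DecidableEq n] [DecidableEq m] in
lemma dot_self_eq (y : n → ℂ) :
    dotProduct (star y) y = ((∑ i, Complex.normSq (y i) : ℝ) : ℂ) := by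
  simp only [dotProduct, Pi.star_apply, Complex.ofReal_sum]
  refine Finset.sum_congr rfl fun i _ => ?_
  rw [← Complex.mul_conj, Complex.star_def]
  ring

omit [DecidableEq n] in
lemma one_sub_mul_self_psd {V : Matrix n m ℂ}
    (h : ∀ x : m → ℂ, (∑ i, Complex.normSq ((V *ᵥ x) i)) ≤ ∑ i, Complex.normSq (x i)) :
    (1 - Vᴴ * V).PosSemidef := by
  refine Matrix.PosSemidef.of_dotProduct_mulVec_nonneg ?_ ?_
  · exact Matrix.isHermitian_one.sub (Matrix.posSemidef_conjTranspose_mul_self V).1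
  · intro x
    rw [Matrix.sub_mulVec, dotProduct_sub, Matrix.one_mulVec]
    have h1 : dotProduct (star x) ((Vᴴ * V) *ᵥ x)
        = dotProduct (star (V *ᵥ x)) (V *ᵥ x) := by
      rw [← Matrix.mulVec_mulVec, Matrix.dotProduct_mulVec, ← Matrix.star_mulVec]
    rw [h1, dot_self_eq, dot_self_eq, sub_nonneg]
    exact_mod_cast Complex.real_le_real.mpr (h x)

lemma one_sub_self_mul_psd {V : Matrix n m ℂ} (hQ : (1 - Vᴴ * V).PosSemidef) :
    (1 - V * Vᴴ).PosSemidef := by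
  haveI : Invertible (1 : Matrix n n ℂ) := invertibleOne
  haveI : Invertible (1 : Matrix m m ℂ) := invertibleOne
  have h1 : (Matrix.fromBlocks (1 : Matrix n n ℂ) V Vᴴ (1 : Matrix m m ℂ)).PosSemidef := by
    rw [Matrix.PosDef.fromBlocks₁₁ V 1 Matrix.PosDef.one]
    simpa using hQ
  have h2 := (Matrix.PosDef.fromBlocks₂₂ 1 V Matrix.PosDef.one).mp h1
  simpa using h2

lemma block_unitary {W1 : Matrix n n ℂ} {W2 : Matrix m m ℂ}
    (h1 : W1 * W1ᴴ = 1) (h2 : W2 * W2ᴴ = 1) :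
    Matrix.fromBlocks W1 0 0 W2 * (Matrix.fromBlocks W1 0 0 W2)ᴴ = 1 := by
  rw [Matrix.fromBlocks_conjTranspose, Matrix.fromBlocks_multiply]
  simp [h1, h2, Matrix.fromBlocks_one]

lemma block_diag_conj (W1 : Matrix n n ℂ) (W2 : Matrix m m ℂ) (u : n → ℝ) (v : m → ℝ) :
    Matrix.fromBlocks W1 0 0 W2 * Matrix.diagonal (fun i => ((Sum.elim u v i : ℝ) : ℂ)) *
      (Matrix.fromBlocks W1 0 0 W2)ᴴ
    = Matrix.fromBlocks (W1 * Matrix.diagonal (fun i => ((u i : ℝ) : ℂ)) * W1ᴴ) 0 0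
        (W2 * Matrix.diagonal (fun j => ((v j : ℝ) : ℂ)) * W2ᴴ) := by
  have hd : (fun i => ((Sum.elim u v i : ℝ) : ℂ))
      = Sum.elim (fun i => ((u i : ℝ) : ℂ)) (fun j => ((v j : ℝ) : ℂ)) := by
    funext i; cases i <;> rfl
  rw [hd, show Sum.elim (fun i => ((u i : ℝ) : ℂ)) (fun j => ((v j : ℝ) : ℂ))
      = (fun i => ((u i : ℝ) : ℂ)) ⊕ᵥ (fun j => ((v j : ℝ) : ℂ)) from rfl,
    ← Matrix.fromBlocks_diagonal, Matrix.fromBlocks_conjTranspose,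
    Matrix.fromBlocks_multiply, Matrix.fromBlocks_multiply]
  simp

lemma shift_spec {X : Matrix n n ℂ} (hX : X.IsHermitian) (r : ℝ) :
    (hX.eigenvectorUnitary : Matrix n n ℂ) *
      Matrix.diagonal (fun i => ((hX.eigenvalues i + r : ℝ) : ℂ)) *
      (hX.eigenvectorUnitary : Matrix n n ℂ)ᴴ = X + (r : ℂ) • 1 := by
  have h2 : (fun i => ((hX.eigenvalues i + r : ℝ) : ℂ))
      = fun i => ((hX.eigenvalues i : ℝ) : ℂ) + ((r : ℝ) : ℂ) := by
    funext i; push_cast; ring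
  rw [h2, ← Matrix.diagonal_add, Matrix.mul_add, Matrix.add_mul,
    ← Matrix.smul_one_eq_diagonal, Matrix.mul_smul, Matrix.smul_mul, mul_one,
    unitary_mul_conjT hX, ← spectral' hX]

set_option maxHeartbeats 1000000 in
lemma key (N M : ℕ) (f : ℝ → ℝ) (hf_mono : OperatorMonotoneOnPos f)
    (A : Matrix (Fin N) (Fin N) ℂ) (B : Matrix (Fin M) (Fin M) ℂ)
    (hA : A.PosSemidef) (hB : B.PosSemidef)
    (V : Matrix (Fin N) (Fin M) ℂ)
    (hQ : (1 - Vᴴ * V).PosSemidef)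
    (hle : (B - Vᴴ * A * V).PosSemidef)
    (δ : ℝ) (hδ : 0 < δ) (hfδ : 0 ≤ f δ) :
    ((hB.1.eigenvectorUnitary : Matrix (Fin M) (Fin M) ℂ) *
        Matrix.diagonal (fun j => ((f (hB.1.eigenvalues j + 2*δ) : ℝ) : ℂ)) *
        (hB.1.eigenvectorUnitary : Matrix (Fin M) (Fin M) ℂ)ᴴ
      - Vᴴ * ((hA.1.eigenvectorUnitary : Matrix (Fin N) (Fin N) ℂ) *
        Matrix.diagonal (fun i => ((f (hA.1.eigenvalues i + δ) : ℝ) : ℂ)) *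
        (hA.1.eigenvectorUnitary : Matrix (Fin N) (Fin N) ℂ)ᴴ) * V).PosSemidef := by
  classical
  set WA := (hA.1.eigenvectorUnitary : Matrix (Fin N) (Fin N) ℂ) with hWAdef
  set WB := (hB.1.eigenvectorUnitary : Matrix (Fin M) (Fin M) ℂ) with hWBdef
  set α := hA.1.eigenvalues with hαdef
  set β := hB.1.eigenvalues with hβdef
  have hWA1 : WA * WAᴴ = 1 := unitary_mul_conjT hA.1
  have hWB1 : WB * WBᴴ = 1 := unitary_mul_conjT hB.1
  have hα : ∀ i, 0 ≤ α i := hA.eigenvalues_nonneg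
  have hβ : ∀ j, 0 ≤ β j := hB.eigenvalues_nonneg
  have hP : (1 - V * Vᴴ).PosSemidef := one_sub_self_mul_psd hQ
  set D := psdSqrt hP with hDdef
  set E := psdSqrt hQ with hEdef
  have hD2 : D * D = 1 - V * Vᴴ := psdSqrt_mul_self hP
  have hE2 : E * E = 1 - Vᴴ * V := psdSqrt_mul_self hQ
  have hDH : Dᴴ = D := (psdSqrt_psd hP).1
  have hEH : Eᴴ = E := (psdSqrt_psd hQ).1
  have hDE : D * V = V * E := by
    refine sqrt_intertwine hP hQ V ?_
    rw [Matrix.sub_mul, Matrix.mul_sub, Matrix.one_mul, Matrix.mul_one, Matrix.mul_assoc]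
  have hDE' : Vᴴ * D = E * Vᴴ := by
    have h := congrArg Matrix.conjTranspose hDE
    simpa [Matrix.conjTranspose_mul, hDH, hEH] using h
  -- the dilation unitary
  set U : Matrix (Fin N ⊕ Fin M) (Fin N ⊕ Fin M) ℂ := Matrix.fromBlocks D V (-Vᴴ) E with hUdef
  have hUH : Uᴴ = Matrix.fromBlocks D (-V) Vᴴ E := by
    rw [hUdef, Matrix.fromBlocks_conjTranspose, hDH, hEH, Matrix.conjTranspose_neg,
      Matrix.conjTranspose_conjTranspose]
  have hU1 : Uᴴ * U = 1 := by
    rw [hUH, hUdef, Matrix.fromBlocks_multiply]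
    have b11 : D * D + (-V) * (-Vᴴ) = (1 : Matrix (Fin N) (Fin N) ℂ) := by
      rw [Matrix.neg_mul, Matrix.mul_neg, neg_neg, hD2]; abel
    have b12 : D * V + (-V) * E = (0 : Matrix (Fin N) (Fin M) ℂ) := by
      rw [Matrix.neg_mul, hDE]; abel
    have b21 : Vᴴ * D + E * (-Vᴴ) = (0 : Matrix (Fin M) (Fin N) ℂ) := by
      rw [Matrix.mul_neg, hDE']; abel
    have b22 : Vᴴ * V + E * E = (1 : Matrix (Fin M) (Fin M) ℂ) := by
      rw [hE2]; abel
    rw [b11, b12, b21, b22, Matrix.fromBlocks_one]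
  have hU2 : U * Uᴴ = 1 := mul_eq_one_comm.mp hU1
  set RA : Matrix (Fin N ⊕ Fin M) (Fin N ⊕ Fin M) ℂ := Matrix.fromBlocks WA 0 0 1 with hRAdef
  have hRA1 : RA * RAᴴ = 1 := block_unitary hWA1 (by simp)
  set G : Matrix (Fin N ⊕ Fin M) (Fin N ⊕ Fin M) ℂ := Uᴴ * RA with hGdef
  have hGH : Gᴴ = RAᴴ * U := by
    rw [hGdef, Matrix.conjTranspose_mul, Matrix.conjTranspose_conjTranspose]
  have hG1 : G * Gᴴ = 1 := by
    rw [hGdef, hGH, Matrix.mul_assoc, ← Matrix.mul_assoc RA, hRA1, Matrix.one_mul, hU1]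
  set HY : Matrix (Fin N ⊕ Fin M) (Fin N ⊕ Fin M) ℂ := Matrix.fromBlocks 1 0 0 WB with hHYdef
  have hHY1 : HY * HYᴴ = 1 := block_unitary (by simp) hWB1
  -- generic conjugation computations
  have GdiagConj : ∀ d : Fin N ⊕ Fin M → ℝ,
      G * Matrix.diagonal (fun i => ((d i : ℝ) : ℂ)) * Gᴴ
        = Uᴴ * (RA * Matrix.diagonal (fun i => ((d i : ℝ) : ℂ)) * RAᴴ) * U := by
    intro d
    rw [hGdef, hGH]
    simp only [Matrix.mul_assoc]
  have RAconj : ∀ (u : Fin N → ℝ) (r : ℝ),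
      RA * Matrix.diagonal (fun i => ((Sum.elim u (fun _ => r) i : ℝ) : ℂ)) * RAᴴ
        = Matrix.fromBlocks (WA * Matrix.diagonal (fun i => ((u i : ℝ) : ℂ)) * WAᴴ) 0 0
            ((r : ℂ) • 1) := by
    intro u r
    rw [hRAdef, block_diag_conj]
    rw [Matrix.conjTranspose_one, Matrix.one_mul, Matrix.mul_one, ← Matrix.smul_one_eq_diagonal]
  have HYconj : ∀ (r : ℝ) (v : Fin M → ℝ),
      HY * Matrix.diagonal (fun i => ((Sum.elim (fun _ => r) v i : ℝ) : ℂ)) * HYᴴ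
        = Matrix.fromBlocks ((r : ℂ) • 1) 0 0
            (WB * Matrix.diagonal (fun j => ((v j : ℝ) : ℂ)) * WBᴴ) := by
    intro r v
    rw [hHYdef, block_diag_conj]
    rw [Matrix.conjTranspose_one, Matrix.one_mul, Matrix.mul_one, ← Matrix.smul_one_eq_diagonal]
  have Ucomp : ∀ (W : Matrix (Fin N) (Fin N) ℂ) (r : ℝ),
      Uᴴ * Matrix.fromBlocks W 0 0 ((r : ℂ) • 1) * U
        = Matrix.fromBlocks (D * W * D + (r : ℂ) • (V * Vᴴ)) (D * W * V - (r : ℂ) • (V * E))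
            (Vᴴ * (W * D) - (r : ℂ) • (E * Vᴴ)) (Vᴴ * (W * V) + (r : ℂ) • (E * E)) := by
    intro W r
    rw [hUH, hUdef, Matrix.fromBlocks_multiply, Matrix.fromBlocks_multiply,
      Matrix.fromBlocks_inj]
    refine ⟨?_, ?_, ?_, ?_⟩ <;>
      simp [Matrix.mul_assoc, Matrix.smul_mul, Matrix.mul_smul, Matrix.mul_neg,
        Matrix.neg_mul, smul_neg, neg_neg, sub_eq_add_neg]
  -- K, H, and the constant c
  set K : Matrix (Fin M) (Fin M) ℂ := B + (δ:ℂ) • 1 - Vᴴ * A * V with hKdef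
  have hKpd : K.PosDef := by
    have h1 : K = (B - Vᴴ * A * V) + (δ:ℂ) • 1 := by rw [hKdef]; abel
    rw [h1]
    refine Matrix.PosDef.posSemidef_add hle ?_
    rw [Matrix.smul_one_eq_diagonal]
    exact Matrix.posDef_diagonal_iff.mpr fun i => Complex.zero_lt_real.mpr hδ
  haveI : Invertible K := hKpd.isUnit.invertible
  set Rm : Matrix (Fin N) (Fin M) ℂ := D * A * V with hRmdef
  set H : Matrix (Fin N) (Fin N) ℂ := D * A * D + Rm * K⁻¹ * Rmᴴ with hHdef
  have hH_herm : H.IsHermitian := by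
    apply Matrix.IsHermitian.add
    · have h := Matrix.isHermitian_mul_mul_conjTranspose D hA.1
      rwa [hDH] at h
    · exact Matrix.isHermitian_mul_mul_conjTranspose Rm hKpd.1.inv
  obtain ⟨c, hc0, hcpsd⟩ := exists_smul_one_sub_psd hH_herm
  set t : ℝ := c + δ with htdef
  -- X and Y
  set μX : Fin N ⊕ Fin M → ℝ := Sum.elim (fun i => α i + δ) (fun _ => δ) with hμXdef
  set μY : Fin N ⊕ Fin M → ℝ := Sum.elim (fun _ => t) (fun j => β j + 2*δ) with hμYdef
  set X := G * Matrix.diagonal (fun i => ((μX i : ℝ):ℂ)) * Gᴴ with hXdef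
  set Y := HY * Matrix.diagonal (fun i => ((μY i : ℝ):ℂ)) * HYᴴ with hYdef
  have hXpd : X.PosDef := pd_conj_diag hG1 (fun i => by
    cases i with
    | inl i => simpa [hμXdef] using add_pos_of_nonneg_of_pos (hα i) hδ
    | inr j => simpa [hμXdef] using hδ)
  have hYpd : Y.PosDef := pd_conj_diag hHY1 (fun i => by
    cases i with
    | inl i => simpa [hμYdef, htdef] using add_pos hc0 hδ
    | inr j => simpa [hμYdef] using add_pos_of_nonneg_of_pos (hβ j) (by linarith))
  -- block forms
  have hXeq : X = Matrix.fromBlocks (D * A * D + (δ:ℂ) • 1) (D * A * V)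
      (Vᴴ * (A * D)) (Vᴴ * (A * V) + (δ:ℂ) • 1) := by
    rw [hXdef, GdiagConj μX,
      show (fun i => ((μX i : ℝ):ℂ))
        = fun i => ((Sum.elim (fun i => α i + δ) (fun _ => δ) i : ℝ):ℂ) from rfl,
      RAconj, shift_spec hA.1 δ, Ucomp, Matrix.fromBlocks_inj]
    refine ⟨?_, ?_, ?_, ?_⟩
    · simp only [Matrix.mul_add, Matrix.add_mul, Matrix.mul_smul, Matrix.smul_mul,
        Matrix.mul_one, Matrix.one_mul, hD2, smul_sub]
      abel
    · simp only [Matrix.mul_add, Matrix.add_mul, Matrix.mul_smul, Matrix.smul_mul,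
        Matrix.mul_one, Matrix.one_mul, hDE]
      abel
    · simp only [Matrix.mul_add, Matrix.add_mul, Matrix.mul_smul, Matrix.smul_mul,
        Matrix.mul_one, Matrix.one_mul, hDE']
      abel
    · simp only [Matrix.mul_add, Matrix.add_mul, Matrix.mul_smul, Matrix.smul_mul,
        Matrix.mul_one, Matrix.one_mul, hE2, smul_sub]
      abel
  have hYeq : Y = Matrix.fromBlocks ((t:ℂ) • 1) 0 0 (B + ((2*δ : ℝ):ℂ) • 1) := by
    rw [hYdef,
      show (fun i => ((μY i : ℝ):ℂ))
        = fun i => ((Sum.elim (fun _ => t) (fun j => β j + 2*δ) i : ℝ):ℂ) from rfl,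
      HYconj, shift_spec hB.1 (2*δ)]
  -- Loewner inequality between X and Y via Schur complement
  have hYX : (Y - X).PosSemidef := by
    have hblocks : Y - X = Matrix.fromBlocks ((c:ℂ) • 1 - D * A * D) (-Rm) (-Rm)ᴴ K := by
      rw [hYeq, hXeq, sub_eq_add_neg, Matrix.fromBlocks_neg, Matrix.fromBlocks_add,
        Matrix.fromBlocks_inj]
      refine ⟨?_, ?_, ?_, ?_⟩
      · rw [htdef, show ((c + δ : ℝ):ℂ) = (c:ℂ) + (δ:ℂ) by push_cast; ring, add_smul]
        abel
      · rw [hRmdef]; abel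
      · rw [hRmdef, Matrix.conjTranspose_neg, Matrix.conjTranspose_mul,
          Matrix.conjTranspose_mul, hDH, hA.1.eq]
        abel
      · rw [hKdef, show ((2*δ : ℝ):ℂ) = (δ:ℂ) + (δ:ℂ) by push_cast; ring, add_smul,
          Matrix.mul_assoc]
        abel
    rw [hblocks, Matrix.PosDef.fromBlocks₂₂ _ _ hKpd]
    have hsimp : ((c:ℂ) • 1 - D * A * D) - (-Rm) * K⁻¹ * (-Rm)ᴴ = (c:ℂ) • 1 - H := by
      simp only [hHdef, Matrix.conjTranspose_neg, Matrix.neg_mul, Matrix.mul_neg, neg_neg]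
      abel
    rw [hsimp]
    exact hcpsd
  -- transport to Fin (N + M)
  have hsub : ∀ (W : Matrix (Fin N ⊕ Fin M) (Fin N ⊕ Fin M) ℂ) (d : Fin N ⊕ Fin M → ℝ),
      (W * Matrix.diagonal (fun i => ((d i : ℝ):ℂ)) * Wᴴ).submatrix
          ⇑finSumFinEquiv.symm ⇑finSumFinEquiv.symm
        = (W.submatrix ⇑finSumFinEquiv.symm ⇑finSumFinEquiv.symm) *
            Matrix.diagonal (fun i => ((d (finSumFinEquiv.symm i) : ℝ):ℂ)) *
            (W.submatrix ⇑finSumFinEquiv.symm ⇑finSumFinEquiv.symm)ᴴ := by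
    intro W d
    rw [Matrix.mul_assoc,
      ← Matrix.submatrix_mul_equiv W _ ⇑finSumFinEquiv.symm finSumFinEquiv.symm
        ⇑finSumFinEquiv.symm,
      ← Matrix.submatrix_mul_equiv (Matrix.diagonal _) Wᴴ ⇑finSumFinEquiv.symm
        finSumFinEquiv.symm ⇑finSumFinEquiv.symm,
      Matrix.submatrix_diagonal_equiv, Matrix.conjTranspose_submatrix, Matrix.mul_assoc]
    rfl
  have hsubU : ∀ (W : Matrix (Fin N ⊕ Fin M) (Fin N ⊕ Fin M) ℂ), W * Wᴴ = 1 →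
      (W.submatrix ⇑finSumFinEquiv.symm ⇑finSumFinEquiv.symm) *
        (W.submatrix ⇑finSumFinEquiv.symm ⇑finSumFinEquiv.symm)ᴴ = 1 := by
    intro W hW
    rw [Matrix.conjTranspose_submatrix,
      Matrix.submatrix_mul_equiv W Wᴴ ⇑finSumFinEquiv.symm finSumFinEquiv.symm
        ⇑finSumFinEquiv.symm, hW, Matrix.submatrix_one_equiv]
  set X' := X.submatrix ⇑finSumFinEquiv.symm ⇑finSumFinEquiv.symm with hX'def
  set Y' := Y.submatrix ⇑finSumFinEquiv.symm ⇑finSumFinEquiv.symm with hY'def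
  have hX'eq : X' = (G.submatrix ⇑finSumFinEquiv.symm ⇑finSumFinEquiv.symm) *
      Matrix.diagonal (fun i => ((μX (finSumFinEquiv.symm i) : ℝ):ℂ)) *
      (G.submatrix ⇑finSumFinEquiv.symm ⇑finSumFinEquiv.symm)ᴴ := by
    rw [hX'def, hXdef, hsub]
  have hY'eq : Y' = (HY.submatrix ⇑finSumFinEquiv.symm ⇑finSumFinEquiv.symm) *
      Matrix.diagonal (fun i => ((μY (finSumFinEquiv.symm i) : ℝ):ℂ)) *
      (HY.submatrix ⇑finSumFinEquiv.symm ⇑finSumFinEquiv.symm)ᴴ := by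
    rw [hY'def, hYdef, hsub]
  have hG'1 := hsubU G hG1
  have hHY'1 := hsubU HY hHY1
  have hX'pd : X'.PosDef := by
    rw [hX'eq]
    exact pd_conj_diag hG'1 (fun i => by
      rcases (finSumFinEquiv.symm i) with j | j
      · simpa [hμXdef] using add_pos_of_nonneg_of_pos (hα j) hδ
      · simpa [hμXdef] using hδ)
  have hY'pd : Y'.PosDef := by
    rw [hY'eq]
    exact pd_conj_diag hHY'1 (fun i => by
      rcases (finSumFinEquiv.symm i) with j | j
      · simpa [hμYdef, htdef] using add_pos hc0 hδ
      · simpa [hμYdef] using add_pos_of_nonneg_of_pos (hβ j) (by linarith))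
  have hYX' : (Y' - X').PosSemidef := by
    rw [hY'def, hX'def,
      show Y.submatrix ⇑finSumFinEquiv.symm ⇑finSumFinEquiv.symm
          - X.submatrix ⇑finSumFinEquiv.symm ⇑finSumFinEquiv.symm
        = (Y - X).submatrix ⇑finSumFinEquiv.symm ⇑finSumFinEquiv.symm from by
          rw [Matrix.submatrix_sub]; rfl]
    exact hYX.submatrix _
  have hmono := hf_mono (N + M) X' Y' hX'pd hY'pd hYX'
  -- identify the functional calculus
  have hcfcX : Matrix.IsHermitian.cfc hX'pd.1 f
      = (G * Matrix.diagonal (fun i => ((f (μX i) : ℝ):ℂ)) * Gᴴ).submatrix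
          ⇑finSumFinEquiv.symm ⇑finSumFinEquiv.symm := by
    rw [cfc_decomp hX'pd.1 f (G.submatrix ⇑finSumFinEquiv.symm ⇑finSumFinEquiv.symm) hG'1
      (fun i => μX (finSumFinEquiv.symm i)) hX'eq, hsub]
  have hcfcY : Matrix.IsHermitian.cfc hY'pd.1 f
      = (HY * Matrix.diagonal (fun i => ((f (μY i) : ℝ):ℂ)) * HYᴴ).submatrix
          ⇑finSumFinEquiv.symm ⇑finSumFinEquiv.symm := by
    rw [cfc_decomp hY'pd.1 f (HY.submatrix ⇑finSumFinEquiv.symm ⇑finSumFinEquiv.symm) hHY'1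
      (fun i => μY (finSumFinEquiv.symm i)) hY'eq, hsub]
  rw [hcfcX, hcfcY,
    show (HY * Matrix.diagonal (fun i => ((f (μY i) : ℝ):ℂ)) * HYᴴ).submatrix
          ⇑finSumFinEquiv.symm ⇑finSumFinEquiv.symm
        - (G * Matrix.diagonal (fun i => ((f (μX i) : ℝ):ℂ)) * Gᴴ).submatrix
          ⇑finSumFinEquiv.symm ⇑finSumFinEquiv.symm
      = ((HY * Matrix.diagonal (fun i => ((f (μY i) : ℝ):ℂ)) * HYᴴ)
          - (G * Matrix.diagonal (fun i => ((f (μX i) : ℝ):ℂ)) * Gᴴ)).submatrix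
          ⇑finSumFinEquiv.symm ⇑finSumFinEquiv.symm from by
        rw [Matrix.submatrix_sub]; rfl] at hmono
  have hS := (Matrix.posSemidef_submatrix_equiv finSumFinEquiv.symm).mp hmono
  -- compute the two conjugations as block matrices
  have hSY : HY * Matrix.diagonal (fun i => ((f (μY i) : ℝ):ℂ)) * HYᴴ
      = Matrix.fromBlocks ((f t : ℂ) • 1) 0 0
          (WB * Matrix.diagonal (fun j => ((f (β j + 2*δ) : ℝ):ℂ)) * WBᴴ) := by
    rw [show (fun i => ((f (μY i) : ℝ):ℂ))
        = fun i => ((Sum.elim (fun _ => f t) (fun j => f (β j + 2*δ)) i : ℝ):ℂ) from by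
          funext i; rcases i with i | i <;> rfl,
      HYconj]
  have hSX : G * Matrix.diagonal (fun i => ((f (μX i) : ℝ):ℂ)) * Gᴴ
      = Matrix.fromBlocks
          (D * (WA * Matrix.diagonal (fun i => ((f (α i + δ) : ℝ):ℂ)) * WAᴴ) * D
            + (f δ : ℂ) • (V * Vᴴ))
          (D * (WA * Matrix.diagonal (fun i => ((f (α i + δ) : ℝ):ℂ)) * WAᴴ) * V
            - (f δ : ℂ) • (V * E))
          (Vᴴ * ((WA * Matrix.diagonal (fun i => ((f (α i + δ) : ℝ):ℂ)) * WAᴴ) * D)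
            - (f δ : ℂ) • (E * Vᴴ))
          (Vᴴ * ((WA * Matrix.diagonal (fun i => ((f (α i + δ) : ℝ):ℂ)) * WAᴴ) * V)
            + (f δ : ℂ) • (E * E)) := by
    rw [GdiagConj,
      show (fun i => ((f (μX i) : ℝ):ℂ))
        = fun i => ((Sum.elim (fun i => f (α i + δ)) (fun _ => f δ) i : ℝ):ℂ) from by
          funext i; rcases i with i | i <;> rfl,
      RAconj, Ucomp]
  rw [hSY, hSX] at hS
  have hS22 := hS.submatrix (Sum.inr : Fin M → Fin N ⊕ Fin M)
  have hsplit : ∀ (S T : Matrix (Fin N ⊕ Fin M) (Fin N ⊕ Fin M) ℂ),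
      (S - T).submatrix (Sum.inr : Fin M → Fin N ⊕ Fin M) Sum.inr
        = S.submatrix Sum.inr Sum.inr - T.submatrix Sum.inr Sum.inr := by
    intro S T; rw [Matrix.submatrix_sub]; rfl
  have hinr : ∀ (A₁ : Matrix (Fin N) (Fin N) ℂ) (A₂ : Matrix (Fin N) (Fin M) ℂ)
      (A₃ : Matrix (Fin M) (Fin N) ℂ) (A₄ : Matrix (Fin M) (Fin M) ℂ),
      (Matrix.fromBlocks A₁ A₂ A₃ A₄).submatrix (Sum.inr : Fin M → Fin N ⊕ Fin M) Sum.inr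
        = A₄ := by
    intro A₁ A₂ A₃ A₄; ext i j; rfl
  rw [hsplit, hinr, hinr] at hS22
  have hfinal : WB * Matrix.diagonal (fun j => ((f (β j + 2*δ) : ℝ):ℂ)) * WBᴴ
      - Vᴴ * (WA * Matrix.diagonal (fun i => ((f (α i + δ) : ℝ):ℂ)) * WAᴴ) * V
    = (WB * Matrix.diagonal (fun j => ((f (β j + 2*δ) : ℝ):ℂ)) * WBᴴ
        - (Vᴴ * ((WA * Matrix.diagonal (fun i => ((f (α i + δ) : ℝ):ℂ)) * WAᴴ) * V)
            + (f δ : ℂ) • (E * E)))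
      + (f δ : ℂ) • (1 - Vᴴ * V) := by
    rw [hE2]
    simp only [Matrix.mul_assoc]
    abel
  rw [hfinal]
  exact hS22.add (psd_real_smul hQ hfδ)


lemma quad_conj (W : Matrix n n ℂ) (d : n → ℝ) (x : n → ℂ) :
    dotProduct (star x) ((W * Matrix.diagonal (fun i => ((d i : ℝ) : ℂ)) * Wᴴ) *ᵥ x)
      = ((∑ i, d i * Complex.normSq ((Wᴴ *ᵥ x) i) : ℝ) : ℂ) := by
  have h1 : dotProduct (star x)
        ((W * Matrix.diagonal (fun i => ((d i : ℝ) : ℂ)) * Wᴴ) *ᵥ x)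
      = dotProduct (star (Wᴴ *ᵥ x))
          (Matrix.diagonal (fun i => ((d i : ℝ) : ℂ)) *ᵥ (Wᴴ *ᵥ x)) := by
    rw [← Matrix.mulVec_mulVec, ← Matrix.mulVec_mulVec, Matrix.dotProduct_mulVec,
      Matrix.star_mulVec]
    congr 1
    rw [Matrix.conjTranspose_conjTranspose]
  rw [h1, dot_diag]

omit [DecidableEq n] [DecidableEq m] in
lemma conj_dot (V : Matrix n m ℂ) (S : Matrix n n ℂ) (x : m → ℂ) :
    dotProduct (star x) ((Vᴴ * S * V) *ᵥ x)
      = dotProduct (star (V *ᵥ x)) (S *ᵥ (V *ᵥ x)) := by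
  rw [← Matrix.mulVec_mulVec, ← Matrix.mulVec_mulVec, Matrix.dotProduct_mulVec,
    ← Matrix.star_mulVec]

/-- let `f : [0,∞) → ℝ` be continuous with `f(0) > 0` and operator monotone on
`(0,∞)`.  If `A`, `B` are positive semidefinite Hermitian matrices and `V` is a contraction
(`‖V‖ ≤ 1` for the ℓ²-operator norm) with `V†·A·V ≤ B` in the Loewner order, then
`V†·f(A)·V ≤ f(B)`. -/
theorem stmt10 (N M : ℕ) (f : ℝ → ℝ)
    (hf_cont : ContinuousOn f (Set.Ici (0 : ℝ))) (hf0 : 0 < f 0)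
    (hf_mono : OperatorMonotoneOnPos f)
    (A : Matrix (Fin N) (Fin N) ℂ) (B : Matrix (Fin M) (Fin M) ℂ)
    (hA : A.PosSemidef) (hB : B.PosSemidef)
    (V : Matrix (Fin N) (Fin M) ℂ)
    (hV : ∀ v : EuclideanSpace ℂ (Fin M), ‖Matrix.toEuclideanLin V v‖ ≤ ‖v‖)
    (hle : (B - Vᴴ * A * V).PosSemidef) :
    (Matrix.IsHermitian.cfc hB.1 f - Vᴴ * Matrix.IsHermitian.cfc hA.1 f * V).PosSemidef := by
  classical
  -- V is a contraction in the quadratic-form sense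
  have hQ : (1 - Vᴴ * V).PosSemidef := by
    apply one_sub_mul_self_psd
    intro x
    have h2 : (∑ i, ‖(Matrix.toEuclideanLin V (WithLp.toLp 2 x)) i‖ ^ 2) ≤ ∑ i, ‖x i‖ ^ 2 := by
      refine (Real.sqrt_le_sqrt_iff (by positivity)).mp ?_
      rw [← EuclideanSpace.norm_eq, ← EuclideanSpace.norm_eq]
      exact hV (WithLp.toLp 2 x)
    have e1 : ∀ z : ℂ, Complex.normSq z = ‖z‖ ^ 2 := fun z => by
      rw [← Complex.sq_norm]
    simp only [e1]
    exact h2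
  set WA := (hA.1.eigenvectorUnitary : Matrix (Fin N) (Fin N) ℂ) with hWAdef
  set WB := (hB.1.eigenvectorUnitary : Matrix (Fin M) (Fin M) ℂ) with hWBdef
  set α := hA.1.eigenvalues with hαdef
  set β := hB.1.eigenvalues with hβdef
  have hα : ∀ i, 0 ≤ α i := hA.eigenvalues_nonneg
  have hβ : ∀ j, 0 ≤ β j := hB.eigenvalues_nonneg
  obtain ⟨δ₀, hδ₀pos, hfpos⟩ : ∃ δ₀ : ℝ, 0 < δ₀ ∧ ∀ δ : ℝ, 0 < δ → δ < δ₀ → 0 ≤ f δ := by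
    have hc : ContinuousWithinAt f (Set.Ici 0) 0 := hf_cont 0 Set.self_mem_Ici
    have hev : ∀ᶠ y in nhdsWithin 0 (Set.Ici 0), 0 < f y := hc.eventually_const_lt hf0
    rw [Filter.eventually_iff, Metric.mem_nhdsWithin_iff] at hev
    obtain ⟨ε, hε, hball⟩ := hev
    refine ⟨ε, hε, fun δ h1 h2 => ?_⟩
    refine le_of_lt (hball (Set.mem_inter ?_ (le_of_lt h1)))
    simpa [Metric.mem_ball, Real.dist_eq, abs_of_pos h1] using h2
  have hkey : ∀ δ : ℝ, 0 < δ → δ < δ₀ →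
      (WB * Matrix.diagonal (fun j => ((f (β j + 2*δ) : ℝ):ℂ)) * WBᴴ
        - Vᴴ * (WA * Matrix.diagonal (fun i => ((f (α i + δ) : ℝ):ℂ)) * WAᴴ) * V).PosSemidef :=
    fun δ h1 h2 => key N M f hf_mono A B hA hB V hQ hle δ h1 (hfpos δ h1 h2)
  have hgoal_eq : Matrix.IsHermitian.cfc hB.1 f - Vᴴ * Matrix.IsHermitian.cfc hA.1 f * V
      = WB * Matrix.diagonal (fun j => ((f (β j) : ℝ):ℂ)) * WBᴴ
        - Vᴴ * (WA * Matrix.diagonal (fun i => ((f (α i) : ℝ):ℂ)) * WAᴴ) * V := rfl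
  rw [hgoal_eq]
  refine Matrix.PosSemidef.of_dotProduct_mulVec_nonneg ?_ ?_
  · refine (herm_conj_diag WB _).sub ?_
    have h := Matrix.isHermitian_mul_mul_conjTranspose Vᴴ
      (herm_conj_diag WA (fun i => f (α i)))
    rwa [Matrix.conjTranspose_conjTranspose] at h
  · intro x
    set cB : Fin M → ℝ := fun j => Complex.normSq ((WBᴴ *ᵥ x) j) with hcB
    set cA : Fin N → ℝ := fun i => Complex.normSq ((WAᴴ *ᵥ (V *ᵥ x)) i) with hcA
    set g : ℝ → ℝ :=
      fun δ => (∑ j, f (β j + 2*δ) * cB j) - ∑ i, f (α i + δ) * cA i with hgdef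
    have hquad : ∀ δ : ℝ, dotProduct (star x)
        ((WB * Matrix.diagonal (fun j => ((f (β j + 2*δ) : ℝ):ℂ)) * WBᴴ
          - Vᴴ * (WA * Matrix.diagonal (fun i => ((f (α i + δ) : ℝ):ℂ)) * WAᴴ) * V) *ᵥ x)
        = ((g δ : ℝ):ℂ) := by
      intro δ
      rw [Matrix.sub_mulVec, dotProduct_sub, quad_conj, conj_dot, quad_conj, hgdef]
      push_cast
      ring
    have hge : ∀ δ, 0 < δ → δ < δ₀ → 0 ≤ g δ := by
      intro δ h1 h2
      have h3 := (hkey δ h1 h2).dotProduct_mulVec_nonneg x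
      rw [hquad δ] at h3
      exact Complex.zero_le_real.mp h3
    have hcont : ContinuousWithinAt g (Set.Ici 0) 0 := by
      apply ContinuousWithinAt.sub
      · refine tendsto_finset_sum _ (fun j _ => ?_)
        have hmaps : Set.MapsTo (fun δ : ℝ => β j + 2*δ) (Set.Ici 0) (Set.Ici 0) := by
          intro δ hδ
          simp only [Set.mem_Ici] at *
          nlinarith [hβ j]
        have hφ : ContinuousWithinAt (fun δ : ℝ => β j + 2*δ) (Set.Ici 0) 0 :=
          (by fun_prop : Continuous fun δ : ℝ => β j + 2*δ).continuousWithinAt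
        have h0 : ContinuousWithinAt f (Set.Ici 0) (β j + 2*0) := by
          have he : β j + 2*0 = β j := by norm_num
          rw [he]
          exact hf_cont _ (hβ j)
        exact (ContinuousWithinAt.comp (g := f) (f := fun δ : ℝ => β j + 2*δ)
          h0 hφ hmaps).mul continuousWithinAt_const
      · refine tendsto_finset_sum _ (fun i _ => ?_)
        have hmaps : Set.MapsTo (fun δ : ℝ => α i + δ) (Set.Ici 0) (Set.Ici 0) := by
          intro δ hδ
          simp only [Set.mem_Ici] at *
          linarith [hα i]
        have hφ : ContinuousWithinAt (fun δ : ℝ => α i + δ) (Set.Ici 0) 0 :=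
          (by fun_prop : Continuous fun δ : ℝ => α i + δ).continuousWithinAt
        have h0 : ContinuousWithinAt f (Set.Ici 0) (α i + 0) := by
          have he : α i + 0 = α i := by norm_num
          rw [he]
          exact hf_cont _ (hα i)
        exact (ContinuousWithinAt.comp (g := f) (f := fun δ : ℝ => α i + δ)
          h0 hφ hmaps).mul continuousWithinAt_const
    have hg0 : 0 ≤ g 0 := by
      have htend : Filter.Tendsto g (nhdsWithin 0 (Set.Ioi 0)) (nhds (g 0)) :=
        hcont.mono Set.Ioi_subset_Ici_self
      refine ge_of_tendsto htend ?_
      filter_upwards [Ioo_mem_nhdsGT_of_mem (Set.left_mem_Ico.mpr hδ₀pos)] with δ hδ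
      exact hge δ hδ.1 hδ.2
    have hfix1 : (fun j => ((f (β j) : ℝ):ℂ)) = fun j => ((f (β j + 2*0) : ℝ):ℂ) := by
      funext j; norm_num
    have hfix2 : (fun i => ((f (α i) : ℝ):ℂ)) = fun i => ((f (α i + 0) : ℝ):ℂ) := by
      funext i; norm_num
    rw [hfix1, hfix2, hquad 0]
    exact Complex.zero_le_real.mpr hg0
end
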